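/- arXiv:1008.1168 — 12 statements merged into one kernel-verified Lean document; each statement's English description precedes it below -/
import Mathlib

section
/- Let A and B be unital C*-algebras and let Φ : A → B be a linear map with Φ(1) = 1. Then Φ is completely positive if and only if for every n ≥ 1 and every self-adjoint matrix a ∈ Mₙ(A) one has Φₙ(a)* = Φₙ(a) and ‖Φₙ(a)‖ ≤ ‖a‖, where Φₙ : Mₙ(A) → Mₙ(B) is the map applying Φ entrywise. -/
/-!
A unital positive map `ψ` between C⋆-algebras is monotone and fixes the real scalars, so it maps
the order interval `-‖a‖ ≤ a ≤ ‖a‖` of a self-adjoint `a` into itself, and a self-adjoint element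
of such an interval has norm at most `‖a‖`. Conversely, if `a ≥ 0` then `‖‖a‖ - a‖ ≤ ‖a‖`, hence
`‖‖a‖ - ψ a‖ ≤ ‖a‖`, which forces the self-adjoint element `ψ a` to be positive.
Applied to the entrywise map on the C⋆-algebra `CStarMatrix (Fin n) (Fin n) A`, where the
spectral radius of a self-adjoint element is its norm, this gives the theorem.
-/

lemma LinearMap.map_algebraMap_real_of_map_one {A B : Type*} [Ring A] [Algebra ℂ A] [Ring B]
    [Algebra ℂ B] (ψ : A →ₗ[ℂ] B) (hψ : ψ 1 = 1) (r : ℝ) :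
    ψ (algebraMap ℝ A r) = algebraMap ℝ B r := by
  simp only [Algebra.algebraMap_eq_smul_one, ψ.map_smul_of_tower, hψ]

section CStarAlgebra

variable {A B : Type*} [CStarAlgebra A] [PartialOrder A] [StarOrderedRing A]
  [CStarAlgebra B] [PartialOrder B] [StarOrderedRing B]

lemma IsSelfAdjoint.norm_le_of_neg_algebraMap_le_of_le_algebraMap {b : B} (hb : IsSelfAdjoint b)
    {r : ℝ} (hr : 0 ≤ r) (hle : b ≤ algebraMap ℝ B r) (hge : -algebraMap ℝ B r ≤ b) :
    ‖b‖ ≤ r := by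
  obtain _ | _ := subsingleton_or_nontrivial B
  · simpa [Subsingleton.elim b 0] using hr
  have spectrum_le := (le_algebraMap_iff_spectrum_le hb).1 hle
  have le_spectrum := (algebraMap_le_iff_le_spectrum (r := -r) hb).1 (by rwa [map_neg])
  rcases CStarAlgebra.norm_or_neg_norm_mem_spectrum hb with h | h
  · exact spectrum_le _ h
  · linarith [le_spectrum _ h]

lemma IsSelfAdjoint.nonneg_of_norm_algebraMap_sub_le {b : B} (hb : IsSelfAdjoint b) {r : ℝ}
    (h : ‖algebraMap ℝ B r - b‖ ≤ r) : 0 ≤ b := by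
  have hsub : IsSelfAdjoint (algebraMap ℝ B r - b) := (IsSelfAdjoint.algebraMap B (.all r)).sub hb
  have : algebraMap ℝ B r - b ≤ algebraMap ℝ B r :=
    hsub.le_algebraMap_norm_self.trans (algebraMap_mono B h)
  simpa using this

theorem LinearMap.map_nonneg_iff_isSelfAdjoint_and_norm_le (ψ : A →ₗ[ℂ] B) (hψ : ψ 1 = 1) :
    (∀ a, 0 ≤ a → 0 ≤ ψ a) ↔ ∀ a, IsSelfAdjoint a → IsSelfAdjoint (ψ a) ∧ ‖ψ a‖ ≤ ‖a‖ := by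
  constructor
  · intro hpos a ha
    let f : A →ₚ[ℂ] B := .mk₀ ψ hpos
    have hle : ψ a ≤ ψ (algebraMap ℝ A ‖a‖) := f.apply_le_of_isSelfAdjoint a ha
    have hge : ψ (-a) ≤ ψ (algebraMap ℝ A ‖-a‖) := f.apply_le_of_isSelfAdjoint (-a) ha.neg
    rw [ψ.map_algebraMap_real_of_map_one hψ] at hle
    rw [map_neg, norm_neg, ψ.map_algebraMap_real_of_map_one hψ, neg_le] at hge
    have hsa : IsSelfAdjoint (ψ a) := ha.map' f
    exact ⟨hsa, hsa.norm_le_of_neg_algebraMap_le_of_le_algebraMap (norm_nonneg a) hle hge⟩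
  · intro hcontr a ha
    have ha' : IsSelfAdjoint a := .of_nonneg ha
    have hsub : IsSelfAdjoint (algebraMap ℝ A ‖a‖ - a) :=
      (IsSelfAdjoint.algebraMap A (.all _)).sub ha'
    have hsub_nonneg : 0 ≤ algebraMap ℝ A ‖a‖ - a := sub_nonneg.2 ha'.le_algebraMap_norm_self
    have hsub_norm : ‖algebraMap ℝ A ‖a‖ - a‖ ≤ ‖a‖ :=
      (CStarAlgebra.norm_le_iff_le_algebraMap _ (norm_nonneg a) hsub_nonneg).2 (sub_le_self _ ha)
    refine (hcontr a ha').1.nonneg_of_norm_algebraMap_sub_le (r := ‖a‖) ?_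
    calc ‖algebraMap ℝ B ‖a‖ - ψ a‖ = ‖ψ (algebraMap ℝ A ‖a‖ - a)‖ := by
          rw [map_sub, ψ.map_algebraMap_real_of_map_one hψ]
      _ ≤ ‖algebraMap ℝ A ‖a‖ - a‖ := (hcontr _ hsub).2
      _ ≤ ‖a‖ := hsub_norm

end CStarAlgebra

namespace CStarMatrix

variable {ι A : Type*} [DecidableEq ι]

lemma mapₗ_one {R B : Type*} [Semiring R] [Semiring A] [Semiring B] [Module R A] [Module R B]
    (Φ : A →ₗ[R] B) (hΦ : Φ 1 = 1) : mapₗ Φ (1 : CStarMatrix ι ι A) = 1 := by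
  ext i j
  rw [mapₗ_apply, map_apply, one_apply, one_apply]
  split_ifs
  exacts [hΦ, map_zero Φ]

variable [Fintype ι]

lemma spectrum_ofMatrix {R : Type*} [CommSemiring R] [Ring A] [Algebra R A] (M : Matrix ι ι A) :
    spectrum R (ofMatrix M) = spectrum R M :=
  rfl

variable [CStarAlgebra A] [PartialOrder A] [StarOrderedRing A]

lemma nonneg_ofMatrix_iff (M : Matrix ι ι A) :
    0 ≤ ofMatrix M ↔ ∃ x : Matrix ι ι A, M = star x * x := by
  -- Instance search does not find the real continuous functional calculus on `CStarMatrix ι ι A`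
  -- directly, so the library lemma is applied through a general C⋆-algebra.
  have nonneg_iff {C : Type _} [CStarAlgebra C] [PartialOrder C] [StarOrderedRing C] (c : C) :
      0 ≤ c ↔ ∃ x, c = star x * x :=
    CStarAlgebra.nonneg_iff_eq_star_mul_self
  exact nonneg_iff (ofMatrix M)

lemma spectralRadius_eq_nnnorm_ofMatrix {M : Matrix ι ι A} (hM : IsSelfAdjoint (ofMatrix M)) :
    spectralRadius ℂ M = ‖ofMatrix M‖₊ := by
  rw [← hM.spectralRadius_eq_nnnorm, spectralRadius, spectralRadius, spectrum_ofMatrix]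

end CStarMatrix

open CStarMatrix in
theorem LinearMap.matrix_map_positive_iff_selfAdjoint_contractive {ι A B : Type*} [Fintype ι]
    [DecidableEq ι] [CStarAlgebra A] [CStarAlgebra B] (Φ : A →ₗ[ℂ] B) (hΦ1 : Φ 1 = 1) :
    (∀ a : Matrix ι ι A, (∃ x : Matrix ι ι A, a = star x * x) →
        ∃ y : Matrix ι ι B, a.map Φ = star y * y) ↔
      ∀ a : Matrix ι ι A, star a = a →
        star (a.map Φ) = a.map Φ ∧ spectralRadius ℂ (a.map Φ) ≤ spectralRadius ℂ a := by
  let := CStarAlgebra.spectralOrder A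
  have := CStarAlgebra.spectralOrderedRing A
  let := CStarAlgebra.spectralOrder B
  have := CStarAlgebra.spectralOrderedRing B
  have key := (mapₗ (m := ι) (n := ι) Φ).map_nonneg_iff_isSelfAdjoint_and_norm_le
    (mapₗ_one Φ hΦ1)
  constructor
  · intro hcp a ha
    have hpos (M : CStarMatrix ι ι A) (hM : 0 ≤ M) : 0 ≤ mapₗ Φ M :=
      (nonneg_ofMatrix_iff _).2 (hcp (ofMatrix.symm M) ((nonneg_ofMatrix_iff _).1 hM))
    obtain ⟨hsa, hnorm⟩ := key.1 hpos (ofMatrix a) ha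
    refine ⟨hsa, ?_⟩
    rw [spectralRadius_eq_nnnorm_ofMatrix (M := a.map Φ) hsa, spectralRadius_eq_nnnorm_ofMatrix ha]
    exact_mod_cast hnorm
  · intro hcontr a ha
    refine (nonneg_ofMatrix_iff (a.map Φ)).1 <|
      key.2 (fun M hM => ?_) (ofMatrix a) ((nonneg_ofMatrix_iff a).2 ha)
    obtain ⟨hsa, hrad⟩ := hcontr (ofMatrix.symm M) hM
    refine ⟨hsa, ?_⟩
    rw [spectralRadius_eq_nnnorm_ofMatrix (M := (ofMatrix.symm M).map Φ) hsa,
      spectralRadius_eq_nnnorm_ofMatrix (M := ofMatrix.symm M) hM] at hrad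
    exact_mod_cast hrad

theorem unital_map_completelyPositive_iff_selfAdjoint_contractive
    {A B : Type*} [CStarAlgebra A] [CStarAlgebra B]
    (Φ : A →ₗ[ℂ] B) (hΦ1 : Φ 1 = 1) :
    (∀ (n : ℕ), 1 ≤ n → ∀ a : Matrix (Fin n) (Fin n) A,
        (∃ x : Matrix (Fin n) (Fin n) A, a = star x * x) →
          ∃ y : Matrix (Fin n) (Fin n) B, a.map Φ = star y * y)
      ↔
    (∀ (n : ℕ), 1 ≤ n → ∀ a : Matrix (Fin n) (Fin n) A, star a = a →
        star (a.map Φ) = a.map Φ ∧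
          spectralRadius ℂ (a.map Φ) ≤ spectralRadius ℂ a) :=
  forall₂_congr fun _ _ => Φ.matrix_map_positive_iff_selfAdjoint_contractive hΦ1
end

section
/- (Stinespring dilation theorem) Let A be a unital C*-algebra, H a complex Hilbert space, and Φ : A → B(H) a unital completely positive linear map. Then there exist a complex Hilbert space K, an isometric complex-linear embedding V : H → K, and a unital *-homomorphism π : A → B(K) such that Φ(a) = V* ∘ π(a) ∘ V for all a ∈ A (equivalently, Φ(a) is the compression of π(a) to the image of H in K). -/
/-!
Put the semi-inner product `⟪a ⊗ h, b ⊗ k⟫ = ⟪h, Φ (a⋆ b) k⟫` on `A →₀ H`. Complete positivity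
makes it positive semidefinite, because the Gram matrix `[aᵢ⋆ aⱼ]` has the form `x⋆ x`, and
conjugate symmetric, because it forces `Φ` to preserve `⋆`. Left multiplication by `x` satisfies
`‖x • f‖ ≤ ‖x‖ ‖f‖` since `‖x‖² - x⋆ x = c⋆ c`, so it extends to the Hilbert completion `K`, and
these extensions form the `⋆`-representation `π`. As `Φ 1 = 1`, `V h = 1 ⊗ h` is an isometry,
and `⟪V k, π a (V h)⟫ = ⟪k, Φ a h⟫` holds by construction.
-/

open scoped InnerProductSpace ComplexOrder Matrix
open UniformSpace (Completion)

universe u v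

theorem CStarAlgebra.exists_star_mul_self_add_star_mul_self_eq {A : Type*} [CStarAlgebra A]
    (a : A) : ∃ c : A, star a * a + star c * c = algebraMap ℝ A (‖a‖ ^ 2) := by
  let _ := CStarAlgebra.spectralOrder A
  have := CStarAlgebra.spectralOrderedRing A
  obtain ⟨c, hc⟩ := (CStarAlgebra.nonneg_iff_eq_star_mul_self
    (a := algebraMap ℝ A (‖a‖ ^ 2) - star a * a)).mp
    (sub_nonneg.mpr CStarAlgebra.star_mul_le_algebraMap_norm_sq)
  exact ⟨c, by rw [← hc, add_sub_cancel]⟩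

theorem Matrix.exists_vecMulVec_star_self_eq_star_mul_self {n R : Type*} [Fintype n] [Nonempty n]
    [Semiring R] [StarRing R] (a : n → R) :
    ∃ x : Matrix n n R, vecMulVec (star a) a = star x * x := by
  classical
  obtain ⟨i₀⟩ := ‹Nonempty n›
  refine ⟨vecMulVec (Pi.single i₀ 1) a, ?_⟩
  rw [star_eq_conjTranspose, conjTranspose_vecMulVec, vecMulVec_mul_vecMulVec]
  simp

theorem Matrix.sum_inner_conjTranspose_mul_self_apply {𝕜 E ι κ : Type*} [RCLike 𝕜]
    [NormedAddCommGroup E] [InnerProductSpace 𝕜 E] [CompleteSpace E] [Fintype ι] [Fintype κ]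
    (y : Matrix κ ι (E →L[𝕜] E)) (h : ι → E) :
    ∑ i, ∑ j, ⟪h i, (yᴴ * y) i j (h j)⟫_𝕜 = ((∑ k, ‖∑ i, y k i (h i)‖ ^ 2 : ℝ) : 𝕜) := by
  push_cast
  simp_rw [← inner_self_eq_norm_sq_to_K, sum_inner, inner_sum, mul_apply, conjTranspose_apply,
    _root_.sum_apply, inner_sum, ContinuousLinearMap.star_eq_adjoint, mul_apply_eq_comp,
    ContinuousLinearMap.adjoint_inner_right]
  calc _ = ∑ i, ∑ k, ∑ j, ⟪y k i (h i), y k j (h j)⟫_𝕜 :=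
        Finset.sum_congr rfl fun _ _ => Finset.sum_comm
    _ = _ := Finset.sum_comm

theorem UniformSpace.Completion.ext_inner_coe {𝕜 E : Type*} [RCLike 𝕜] [SeminormedAddCommGroup E]
    [InnerProductSpace 𝕜 E] {T S : Completion E →L[𝕜] Completion E}
    (h : ∀ x y : E, ⟪(x : Completion E), T y⟫_𝕜 = ⟪(x : Completion E), S y⟫_𝕜) : T = S := by
  ext z
  induction z using Completion.induction_on with
  | hp => exact isClosed_eq T.continuous S.continuous
  | ih y =>
    refine ext_inner_left 𝕜 fun w => ?_
    induction w using Completion.induction_on with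
    | hp => exact isClosed_eq (by fun_prop) (by fun_prop)
    | ih x => exact h x y

def IsCompletelyPositive {R S : Type*} [NonUnitalNonAssocSemiring R] [Star R]
    [NonUnitalNonAssocSemiring S] [Star S] (Φ : R → S) : Prop :=
  ∀ (n : ℕ) (M : Matrix (Fin n) (Fin n) R),
    (∃ x : Matrix (Fin n) (Fin n) R, M = star x * x) →
      ∃ y : Matrix (Fin n) (Fin n) S, M.map Φ = star y * y

namespace IsCompletelyPositive

theorem map_star {R S : Type*} [Semiring R] [StarRing R] [NonUnitalSemiring S] [StarRing S]
    {Φ : R → S} (hΦ : IsCompletelyPositive Φ) (x : R) : Φ (star x) = star (Φ x) := by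
  -- `Φ₂` maps `[[1, x], [x⋆, x⋆ x]] ≥ 0` to a self-adjoint matrix; compare its corner entries.
  obtain ⟨y, hy⟩ := hΦ 2 _ (Matrix.exists_vecMulVec_star_self_eq_star_mul_self ![1, x])
  have := congrFun (congrFun (IsSelfAdjoint.star_mul_self y) 0) 1
  rw [← hy] at this
  simpa using congrArg star this

theorem sum_univ_inner_nonneg {𝕜 R E ι : Type*} [RCLike 𝕜] [Semiring R] [StarRing R]
    [NormedAddCommGroup E] [InnerProductSpace 𝕜 E] [CompleteSpace E] [Fintype ι]
    {Φ : R → (E →L[𝕜] E)} (hΦ : IsCompletelyPositive Φ) (a : ι → R) (h : ι → E) :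
    0 ≤ ∑ i, ∑ j, ⟪h i, Φ (star (a i) * a j) (h j)⟫_𝕜 := by
  rcases isEmpty_or_nonempty ι with hι | hι
  · simp
  let e := (Fintype.equivFin ι).symm
  have : Nonempty (Fin (Fintype.card ι)) := e.nonempty
  obtain ⟨y, hy⟩ := hΦ _ _ (Matrix.exists_vecMulVec_star_self_eq_star_mul_self (a ∘ e))
  calc (0 : 𝕜) ≤ ((∑ k, ‖∑ i, y k i (h (e i))‖ ^ 2 : ℝ) : 𝕜) := by
        exact_mod_cast by positivity
    _ = ∑ i, ∑ j, ⟪h (e i), (star y * y) i j (h (e j))⟫_𝕜 :=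
        (Matrix.sum_inner_conjTranspose_mul_self_apply y (h ∘ e)).symm
    _ = ∑ i, ∑ j, ⟪h i, Φ (star (a i) * a j) (h j)⟫_𝕜 := by
        rw [← hy, ← e.sum_comp]
        simp_rw [← e.sum_comp]
        simp [Matrix.vecMulVec_apply]

theorem sum_inner_nonneg {𝕜 R E ι : Type*} [RCLike 𝕜] [Semiring R] [StarRing R]
    [NormedAddCommGroup E] [InnerProductSpace 𝕜 E] [CompleteSpace E]
    {Φ : R → (E →L[𝕜] E)} (hΦ : IsCompletelyPositive Φ) (s : Finset ι) (a : ι → R) (h : ι → E) :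
    0 ≤ ∑ i ∈ s, ∑ j ∈ s, ⟪h i, Φ (star (a i) * a j) (h j)⟫_𝕜 := by
  simp_rw [← Finset.sum_coe_sort s]
  exact hΦ.sum_univ_inner_nonneg (fun i : s => a i) (fun i => h i)

end IsCompletelyPositive

namespace Stinespring

variable {A : Type u} [CStarAlgebra A]
  {H : Type v} [NormedAddCommGroup H] [InnerProductSpace ℂ H]
  (Φ : A →ₗ[ℂ] (H →L[ℂ] H))

/-- `A →₀ H` stands in for the algebraic tensor product `A ⊗ H`. Its extra vectors are null for
`form`, so `x ↦ lmul x` is additive only up to null vectors, and exactly so after completion. -/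
def PreHilbert (_ : A →ₗ[ℂ] (H →L[ℂ] H)) : Type (max u v) := A →₀ H

noncomputable instance : AddCommGroup (PreHilbert Φ) := inferInstanceAs (AddCommGroup (A →₀ H))
noncomputable instance : Module ℂ (PreHilbert Φ) := inferInstanceAs (Module ℂ (A →₀ H))

noncomputable def form : (A →₀ H) →ₗ⋆[ℂ] (A →₀ H) →ₗ[ℂ] ℂ :=
  Finsupp.lsum ℂ fun a => (Finsupp.lsum ℂ fun b =>
    ((innerₛₗ ℂ).compl₂ (Φ (star a * b) : H →ₗ[ℂ] H)).flip).flip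

noncomputable def lmul (x : A) : (A →₀ H) →ₗ[ℂ] (A →₀ H) := Finsupp.lmapDomain H ℂ (x * ·)

variable {Φ}

theorem form_apply (f g : A →₀ H) :
    form Φ f g = f.sum fun a h => g.sum fun b k => ⟪h, Φ (star a * b) k⟫_ℂ := by
  simp [form, Finsupp.sum]

@[simp]
theorem form_single_single (a b : A) (h k : H) :
    form Φ (Finsupp.single a h) (Finsupp.single b k) = ⟪h, Φ (star a * b) k⟫_ℂ := by
  simp [form]

@[simp]
theorem lmul_single (x a : A) (h : H) : lmul x (Finsupp.single a h) = Finsupp.single (x * a) h :=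
  Finsupp.mapDomain_single

theorem lmul_one : lmul (H := H) (1 : A) = LinearMap.id :=
  Finsupp.lhom_ext fun a h => by simp

theorem lmul_mul (x y : A) : lmul (H := H) (x * y) = lmul x ∘ₗ lmul y :=
  Finsupp.lhom_ext fun a h => by simp [mul_assoc]

theorem form_lmul_left (x : A) (f g : A →₀ H) :
    form Φ (lmul x f) g = form Φ f (lmul (star x) g) := by
  have : (form Φ).comp (lmul x) = (form Φ).compl₂ (lmul (star x)) :=
    Finsupp.lhom_ext fun a h => Finsupp.lhom_ext fun b k => by simp [mul_assoc]
  exact LinearMap.congr_fun₂ this f g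

theorem form_lmul_lmul (x y : A) (f g : A →₀ H) :
    form Φ (lmul x f) (lmul y g) = form Φ f (lmul (star x * y) g) := by
  rw [form_lmul_left, lmul_mul, LinearMap.comp_apply]

theorem form_lmul_add (x y : A) (f g : A →₀ H) :
    form Φ f (lmul (x + y) g) = form Φ f (lmul x g) + form Φ f (lmul y g) := by
  have : (form Φ).compl₂ (lmul (x + y)) = (form Φ).compl₂ (lmul x) + (form Φ).compl₂ (lmul y) :=
    Finsupp.lhom_ext fun a h => Finsupp.lhom_ext fun b k => by simp [add_mul, mul_add]
  exact LinearMap.congr_fun₂ this f g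

theorem form_lmul_smul (t : ℂ) (x : A) (f g : A →₀ H) :
    form Φ f (lmul (t • x) g) = t * form Φ f (lmul x g) := by
  have : (form Φ).compl₂ (lmul (t • x)) = t • (form Φ).compl₂ (lmul x) :=
    Finsupp.lhom_ext fun a h => Finsupp.lhom_ext fun b k => by simp
  exact LinearMap.congr_fun₂ this f g

variable [CompleteSpace H]

theorem form_conj_symm (hΦ : IsCompletelyPositive Φ) (f g : A →₀ H) :
    starRingEnd ℂ (form Φ g f) = form Φ f g := by
  simp_rw [form_apply, map_finsuppSum, inner_conj_symm,
    ← ContinuousLinearMap.adjoint_inner_right, ← ContinuousLinearMap.star_eq_adjoint,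
    ← hΦ.map_star, star_mul, star_star]
  exact Finsupp.sum_comm _ _ _

theorem form_self_nonneg (hΦ : IsCompletelyPositive Φ) (f : A →₀ H) : 0 ≤ form Φ f f := by
  rw [form_apply]
  exact hΦ.sum_inner_nonneg f.support id f

theorem re_form_lmul_self_le (hΦ : IsCompletelyPositive Φ) (x : A) (f : A →₀ H) :
    (form Φ (lmul x f) (lmul x f)).re ≤ ‖x‖ ^ 2 * (form Φ f f).re := by
  obtain ⟨c, hc⟩ := CStarAlgebra.exists_star_mul_self_add_star_mul_self_eq x
  have hsum : form Φ (lmul x f) (lmul x f) + form Φ (lmul c f) (lmul c f) =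
      (‖x‖ ^ 2 : ℝ) * form Φ f f := by
    rw [form_lmul_lmul, form_lmul_lmul, ← form_lmul_add, hc, Algebra.algebraMap_eq_smul_one,
      ← Complex.coe_smul, form_lmul_smul, lmul_one, LinearMap.id_apply]
  have hc_nonneg := (Complex.nonneg_iff.mp (form_self_nonneg hΦ (lmul c f))).1
  have := congrArg Complex.re hsum
  simp only [Complex.add_re, Complex.re_ofReal_mul] at this
  linarith

variable [hΦ : Fact (IsCompletelyPositive Φ)]

namespace PreHilbert

variable (Φ) in
noncomputable abbrev core : PreInnerProductSpace.Core ℂ (PreHilbert Φ) where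
  inner f g := form Φ f g
  conj_inner_symm f g := form_conj_symm hΦ.out f g
  re_inner_nonneg f := (Complex.nonneg_iff.mp (form_self_nonneg hΦ.out f)).1
  add_left f f' g := LinearMap.map_add₂ (form Φ) f f' g
  smul_left f g c := LinearMap.map_smulₛₗ₂ (form Φ) c f g

noncomputable instance : SeminormedAddCommGroup (PreHilbert Φ) :=
  InnerProductSpace.Core.toSeminormedAddCommGroup (c := core Φ)

noncomputable instance : InnerProductSpace ℂ (PreHilbert Φ) := InnerProductSpace.ofCore (core Φ)

end PreHilbert

open PreHilbert

variable (Φ) in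
noncomputable def lmulCLM (x : A) : PreHilbert Φ →L[ℂ] PreHilbert Φ :=
  LinearMap.mkContinuous (lmul x) ‖x‖ fun f => by
    refine (pow_le_pow_iff_left₀ (norm_nonneg _) (by positivity) two_ne_zero).mp ?_
    rw [mul_pow, @norm_sq_eq_re_inner ℂ (PreHilbert Φ), @norm_sq_eq_re_inner ℂ (PreHilbert Φ)]
    exact re_form_lmul_self_le hΦ.out x f

theorem inner_coe_completion_lmulCLM_coe (x : A) (f g : PreHilbert Φ) :
    ⟪(g : Completion (PreHilbert Φ)), (lmulCLM Φ x).completion f⟫_ℂ = form Φ g (lmul x f) := by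
  rw [ContinuousLinearMap.completion_apply_coe, Completion.inner_coe]
  rfl

variable (Φ) in
noncomputable def rep : A →⋆ₐ[ℂ] (Completion (PreHilbert Φ) →L[ℂ] Completion (PreHilbert Φ)) :=
  { AlgHom.ofLinearMap
      { toFun x := (lmulCLM Φ x).completion
        map_add' x y := Completion.ext_inner_coe fun g f => by
          rw [inner_coe_completion_lmulCLM_coe, add_apply, inner_add_right,
            inner_coe_completion_lmulCLM_coe, inner_coe_completion_lmulCLM_coe]
          exact form_lmul_add x y g f
        map_smul' t x := Completion.ext_inner_coe fun g f => by
          rw [inner_coe_completion_lmulCLM_coe, RingHom.id_apply, smul_apply, inner_smul_right,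
            inner_coe_completion_lmulCLM_coe]
          exact form_lmul_smul t x g f }
      (Completion.ext_inner_coe fun g f => by
        rw [LinearMap.coe_mk, AddHom.coe_mk, inner_coe_completion_lmulCLM_coe, lmul_one,
          one_apply_eq_self, Completion.inner_coe]
        rfl)
      (fun x y => Completion.ext_inner_coe fun g f => by
        rw [LinearMap.coe_mk, AddHom.coe_mk, inner_coe_completion_lmulCLM_coe, mul_apply_eq_comp,
          ContinuousLinearMap.completion_apply_coe, inner_coe_completion_lmulCLM_coe, lmul_mul]
        rfl) with
    map_star' x := show (lmulCLM Φ (star x)).completion = star (lmulCLM Φ x).completion from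
      Completion.ext_inner_coe fun g f => by
        rw [inner_coe_completion_lmulCLM_coe, ContinuousLinearMap.star_eq_adjoint,
          ContinuousLinearMap.adjoint_inner_right, ContinuousLinearMap.completion_apply_coe,
          Completion.inner_coe]
        exact (form_lmul_left x g f).symm }

theorem rep_apply (x : A) : rep Φ x = (lmulCLM Φ x).completion := rfl

variable (Φ) in
noncomputable def embedding (hΦ1 : Φ 1 = 1) : H →ₗᵢ[ℂ] Completion (PreHilbert Φ) :=
  Completion.toComplₗᵢ.comp
    { toLinearMap := Finsupp.lsingle 1
      norm_map' := fun h => by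
        have : form Φ (Finsupp.single 1 h) (Finsupp.single 1 h) = (‖h‖ : ℂ) ^ 2 := by
          simp [hΦ1, inner_self_eq_norm_sq_to_K]
        rw [← sq_eq_sq₀ (norm_nonneg _) (norm_nonneg _), @norm_sq_eq_re_inner ℂ (PreHilbert Φ)]
        exact (congrArg Complex.re this).trans (by norm_cast) }

theorem embedding_apply (hΦ1 : Φ 1 = 1) (h : H) :
    embedding Φ hΦ1 h = ((↑) : PreHilbert Φ → Completion (PreHilbert Φ)) (Finsupp.single 1 h) :=
  rfl

theorem adjoint_embedding_comp_rep_comp_embedding (hΦ1 : Φ 1 = 1) (a : A) :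
    (embedding Φ hΦ1).toContinuousLinearMap.adjoint.comp
      ((rep Φ a).comp (embedding Φ hΦ1).toContinuousLinearMap) = Φ a := by
  ext h
  refine ext_inner_left ℂ fun k => ?_
  rw [ContinuousLinearMap.comp_apply, ContinuousLinearMap.comp_apply,
    ContinuousLinearMap.adjoint_inner_right, LinearIsometry.coe_toContinuousLinearMap,
    embedding_apply, embedding_apply, rep_apply]
  exact (inner_coe_completion_lmulCLM_coe a _ _).trans (by simp)

end Stinespring

theorem stinespring_dilation
    {A : Type u} [CStarAlgebra A]
    {H : Type v} [NormedAddCommGroup H] [InnerProductSpace ℂ H] [CompleteSpace H]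
    (Φ : A →ₗ[ℂ] (H →L[ℂ] H)) (hΦ1 : Φ 1 = 1)
    (hΦcp : ∀ (n : ℕ) (M : Matrix (Fin n) (Fin n) A),
      (∃ x : Matrix (Fin n) (Fin n) A, M = star x * x) →
        ∃ y : Matrix (Fin n) (Fin n) (H →L[ℂ] H), M.map Φ = star y * y) :
    ∃ (K : Type (max u v)) (_ : NormedAddCommGroup K) (_ : InnerProductSpace ℂ K)
      (_ : CompleteSpace K) (V : H →L[ℂ] K) (π : A →⋆ₐ[ℂ] (K →L[ℂ] K)),
      Isometry V ∧
      ∀ a : A, Φ a = (ContinuousLinearMap.adjoint V).comp ((π a).comp V) := by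
  have : Fact (IsCompletelyPositive Φ) := ⟨hΦcp⟩
  exact ⟨_, inferInstance, inferInstance, inferInstance,
    (Stinespring.embedding Φ hΦ1).toContinuousLinearMap, Stinespring.rep Φ,
    (Stinespring.embedding Φ hΦ1).isometry,
    fun a => (Stinespring.adjoint_embedding_comp_rep_comp_embedding hΦ1 a).symm⟩
end

section
/- (Kadison–Schwarz inequality) Let A and B be unital C*-algebras and Φ : A → B a unital completely positive linear map. Then for every a ∈ A one has Φ(a)* Φ(a) ≤ Φ(a* a) in the canonical order of the C*-algebra B. -/
/-!
Apply complete positivity to the positive matrix `star x * x = !![1, a; star a, star a * a]`,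
`x = !![1, a; 0, 0]`, to get `y` with `Φ₂(star x * x) = star y * y`. With `u` and `v` the columns
of `y` this says `u* u = 1`, `u* v = Φ a` and `v* v = Φ (star a * a)`, and then
`Φ (star a * a) - star (Φ a) * Φ a = (v - u Φ(a))* (v - u Φ(a))`, a sum of squares.
-/

theorem sum_star_sub_mul_mul_sub_mul {R ι : Type*} [Ring R] [StarRing R] [Fintype ι]
    {u v : ι → R} {c : R} (hu : ∑ k, star (u k) * u k = 1) (hc : ∑ k, star (u k) * v k = c) :
    ∑ k, star (v k - u k * c) * (v k - u k * c) = ∑ k, star (v k) * v k - star c * c := by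
  have hc' : ∑ k, star (v k) * u k = star c := by
    simp only [← hc, star_sum, star_mul, star_star]
  calc ∑ k, star (v k - u k * c) * (v k - u k * c)
      = ∑ k, star (v k) * v k - (∑ k, star (v k) * u k) * c
          - star c * (∑ k, star (u k) * v k) + star c * (∑ k, star (u k) * u k) * c := by
        simp only [star_sub, star_mul, sub_mul, mul_sub, Finset.sum_sub_distrib, Finset.sum_mul,
          Finset.mul_sum, mul_assoc]
        abel
    _ = ∑ k, star (v k) * v k - star c * c := by
        rw [hu, hc, hc']
        noncomm_ring

theorem CStarAlgebra.exists_star_mul_self_eq_sum {B ι : Type*} [CStarAlgebra B] [Fintype ι]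
    (z : ι → B) : ∃ w : B, ∑ k, star (z k) * z k = star w * w := by
  let := CStarAlgebra.spectralOrder B
  have := CStarAlgebra.spectralOrderedRing B
  exact CStarAlgebra.nonneg_iff_eq_star_mul_self.mp
    (Finset.sum_nonneg fun k _ => star_mul_self_nonneg (z k))

theorem Matrix.star_mul_self_apply {R ι : Type*} [Semiring R] [StarRing R] [Fintype ι]
    (y : Matrix ι ι R) (i j : ι) : (star y * y) i j = ∑ k, star (y k i) * y k j := by
  simp only [mul_apply, star_apply]

theorem kadison_schwarz
    {A B : Type*} [CStarAlgebra A] [CStarAlgebra B]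
    (Φ : A →ₗ[ℂ] B) (hΦ1 : Φ 1 = 1)
    (hΦcp : ∀ (n : ℕ) (M : Matrix (Fin n) (Fin n) A),
      (∃ x : Matrix (Fin n) (Fin n) A, M = star x * x) →
        ∃ y : Matrix (Fin n) (Fin n) B, M.map Φ = star y * y)
    (a : A) :
    ∃ z : B, Φ (star a * a) - star (Φ a) * Φ a = star z * z := by
  set x : Matrix (Fin 2) (Fin 2) A := !![1, a; 0, 0]
  obtain ⟨y, hy⟩ := hΦcp 2 (star x * x) ⟨x, rfl⟩
  have entry (i j : Fin 2) : Φ ((star x * x) i j) = ∑ k, star (y k i) * y k j := by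
    rw [← Matrix.star_mul_self_apply, ← hy, Matrix.map_apply]
  have hu : ∑ k, star (y k 0) * y k 0 = 1 := by
    simpa [x, Matrix.star_mul_self_apply, hΦ1] using (entry 0 0).symm
  have hc : ∑ k, star (y k 0) * y k 1 = Φ a := by
    simpa [x, Matrix.star_mul_self_apply] using (entry 0 1).symm
  have hv : ∑ k, star (y k 1) * y k 1 = Φ (star a * a) := by
    simpa [x, Matrix.star_mul_self_apply] using (entry 1 1).symm
  obtain ⟨z, hz⟩ := CStarAlgebra.exists_star_mul_self_eq_sum fun k => y k 1 - y k 0 * Φ a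
  exact ⟨z, by rw [← hv, ← sum_star_sub_mul_mul_sub_mul hu hc, hz]⟩
end

section
/- Let H be a complex Hilbert space, n ≥ 1, and let a_1, …, a_n ∈ B(H) be linearly independent bounded operators. Then there exist unit vectors ξ_1, …, ξ_n ∈ H such that the n×n complex matrix with entries ⟨ξ_i, a_j ξ_i⟩ (i, j = 1, …, n) is invertible (has full rank n). -/
/-!
If the vectors `(⟨ξ, aⱼ ξ⟩)ⱼ`, `‖ξ‖ = 1`, did not span `ℂⁿ`, a nonzero functional `w` would
vanish on all of them, i.e. `⟨ξ, b ξ⟩ = 0` for every `ξ` with `b = ∑ⱼ wⱼ aⱼ`. Over `ℂ`,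
polarization forces `b = 0`, contradicting linear independence. A spanning set of `ℂⁿ` contains
`n` linearly independent vectors, and these are the rows of the required matrix.
-/

open Module Submodule
open scoped InnerProductSpace

theorem exists_linearIndependent_of_span_eq_top {K V ι : Type*} [DivisionRing K]
    [AddCommGroup V] [Module K V] [FiniteDimensional K V] [Fintype ι] {s : Set V}
    (hs : span K s = ⊤) (hι : Fintype.card ι = finrank K V) :
    ∃ v : ι → V, (∀ i, v i ∈ s) ∧ LinearIndependent K v := by
  obtain ⟨v, hvs, -, hv⟩ := exists_fun_fin_finrank_span_eq K s
  have hcard : Fintype.card ι = finrank K (span K s) := by rw [hs, finrank_top, hι]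
  let e := Fintype.equivFinOfCardEq hcard
  exact ⟨v ∘ e, fun i => hvs (e i), hv.comp e e.injective⟩

section

variable {E : Type*} [NormedAddCommGroup E] [InnerProductSpace ℂ E]

theorem ContinuousLinearMap.eq_zero_of_forall_norm_eq_one_inner_self_apply_eq_zero
    (T : E →L[ℂ] E) (hT : ∀ ξ : E, ‖ξ‖ = 1 → ⟪ξ, T ξ⟫_ℂ = 0) : T = 0 := by
  have hself : ∀ x : E, ⟪x, T x⟫_ℂ = 0 := by
    intro x
    rcases eq_or_ne x 0 with rfl | hx
    · simp
    · simpa [inner_smul_left, inner_smul_right, hx] using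
        hT ((‖x‖⁻¹ : ℂ) • x) (norm_smul_inv_norm hx)
  refine ContinuousLinearMap.coe_injective ((inner_map_self_eq_zero (T : E →ₗ[ℂ] E)).1 ?_)
  intro x
  rw [← inner_conj_symm]
  simp [hself x]

variable {ι : Type*}

def jointNumericalRange (a : ι → E →L[ℂ] E) : Set (ι → ℂ) :=
  {z | ∃ ξ : E, ‖ξ‖ = 1 ∧ (fun j => ⟪ξ, a j ξ⟫_ℂ) = z}

theorem LinearIndependent.span_jointNumericalRange_eq_top [Fintype ι] {a : ι → E →L[ℂ] E}
    (ha : LinearIndependent ℂ a) : span ℂ (jointNumericalRange a) = ⊤ := by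
  classical
  by_contra hne
  obtain ⟨φ, hφ, hφW⟩ := exists_dual_map_eq_bot_of_lt_top (lt_top_iff_ne_top.2 hne) inferInstance
  set w : ι → ℂ := fun i => φ fun j => if i = j then 1 else 0
  have hφw : ∀ z, φ z = ∑ i, z i * w i := fun z => φ.pi_apply_eq_sum_univ z
  have hb : ∑ i, w i • a i = 0 := by
    refine ContinuousLinearMap.eq_zero_of_forall_norm_eq_one_inner_self_apply_eq_zero _ ?_
    intro ξ hξ
    have hφξ : φ (fun j => ⟪ξ, a j ξ⟫_ℂ) = 0 :=
      (LinearMap.le_ker_iff_map.2 hφW) (subset_span ⟨ξ, hξ, rfl⟩)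
    simpa [hφw, inner_sum, inner_smul_right, mul_comm] using hφξ
  have hw : w = 0 := funext (Fintype.linearIndependent_iff.1 ha w hb)
  exact hφ (LinearMap.ext fun z => by simp [hφw, hw])

end

theorem exists_unit_vectors_matrix_invertible_general
    {H : Type*} [NormedAddCommGroup H] [InnerProductSpace ℂ H]
    (n : ℕ) (a : Fin n → (H →L[ℂ] H)) (ha : LinearIndependent ℂ a) :
    ∃ ξ : Fin n → H, (∀ i, ‖ξ i‖ = 1) ∧
      IsUnit (Matrix.of fun i j => (inner ℂ (ξ i) ((a j) (ξ i)) : ℂ)) := by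
  obtain ⟨v, hvW, hv⟩ :=
    exists_linearIndependent_of_span_eq_top (ι := Fin n) ha.span_jointNumericalRange_eq_top
      (by simp)
  choose ξ hξ hξv using hvW
  refine ⟨ξ, hξ, ?_⟩
  rw [← Matrix.linearIndependent_rows_iff_isUnit]
  exact (funext hξv : Matrix.row _ = v) ▸ hv

theorem exists_unit_vectors_matrix_invertible
    {H : Type*} [NormedAddCommGroup H] [InnerProductSpace ℂ H] [CompleteSpace H]
    (n : ℕ) (hn : 1 ≤ n) (a : Fin n → (H →L[ℂ] H)) (ha : LinearIndependent ℂ a) :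
    ∃ ξ : Fin n → H, (∀ i, ‖ξ i‖ = 1) ∧
      IsUnit (Matrix.of fun i j => (inner ℂ (ξ i) ((a j) (ξ i)) : ℂ)) :=
  exists_unit_vectors_matrix_invertible_general n a ha
end

section
/- (Density of mixed vector states) Let H be a complex Hilbert space and C ⊆ B(H) a unital C*-subalgebra (a closed star-subalgebra containing the identity). Let ρ : C → ℂ be a linear functional with ρ(1) = 1 and ρ(x* x) ≥ 0 for all x ∈ C (a state on C). Then for every finite collection x_1, …, x_n ∈ C and every ε > 0 there exist l ∈ ℕ, nonnegative real coefficients λ_1, …, λ_l with Σ_j λ_j = 1, and unit vectors ξ_1, …, ξ_l ∈ H such that |ρ(x_i) − Σ_{j=1}^{l} λ_j ⟨ξ_j, x_i ξ_j⟩| < ε for every i = 1, …, n. -/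
/-!
Let `K ⊆ ℂⁿ` be the convex hull of the tuples `(⟨ξ, xᵢ ξ⟩)ᵢ` over unit vectors `ξ`; it suffices
that `(ρ xᵢ)ᵢ` lies in the closure of `K`. Otherwise Hahn–Banach yields `c ∈ ℂⁿ` and `u` with
`Re ⟨ξ, a ξ⟩ < u < Re ρ(a)` for `a = Σ cᵢ xᵢ` and all unit `ξ`. The first inequality says
`Re a ≤ u` as operators, and `u - Re a` is then a square `s* s` with `s ∈ C`, via the continuous
functional calculus in the closed algebra `C`. Positivity of `ρ` gives `Re ρ(a) ≤ u`.
-/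

open scoped ComplexOrder InnerProductSpace ComplexStarModule

section StarSubalgebra

variable {A : Type*} [CStarAlgebra A] [PartialOrder A] [StarOrderedRing A]
  {S : StarSubalgebra ℂ A}

theorem StarSubalgebra.exists_star_mul_self_eq_of_nonneg (hS : IsClosed (S : Set A)) {a : A}
    (haS : a ∈ S) (ha : 0 ≤ a) : ∃ s ∈ S, star s * s = a := by
  refine ⟨CFC.sqrt a, ?_, ?_⟩
  · rw [CFC.sqrt_eq_real_sqrt a]
    exact cfcₙ_mem (hs := hS) Real.sqrt haS
  · rw [(CFC.sqrt_nonneg a).isSelfAdjoint.star_eq, CFC.sqrt_mul_sqrt_self a]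

namespace LinearMap

variable (ρ : S →ₗ[ℂ] ℂ)

theorem apply_nonneg_of_coe_nonneg (hρ : ∀ x : S, 0 ≤ ρ (star x * x))
    (hS : IsClosed (S : Set A)) {a : S} (ha : 0 ≤ (a : A)) : 0 ≤ ρ a := by
  obtain ⟨s, hsS, hs⟩ := S.exists_star_mul_self_eq_of_nonneg hS a.2 ha
  have ha' : a = star ⟨s, hsS⟩ * ⟨s, hsS⟩ := Subtype.ext hs.symm
  exact ha' ▸ hρ _

theorem im_apply_eq_zero_of_isSelfAdjoint (hρ : ∀ x : S, 0 ≤ ρ (star x * x))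
    (hS : IsClosed (S : Set A)) (hρ1 : ρ 1 = 1) {b : S} (hb : IsSelfAdjoint b) :
    (ρ b).im = 0 := by
  have hb' : IsSelfAdjoint (b : A) := hb.map S.subtype
  have hnonneg : 0 ≤ ρ ((‖(b : A)‖ : ℂ) • 1 + b) := by
    refine ρ.apply_nonneg_of_coe_nonneg hρ hS ?_
    simpa [Algebra.algebraMap_eq_smul_one, neg_le_iff_add_nonneg'] using
      hb'.neg_algebraMap_norm_le_self
  rw [map_add, map_smul, hρ1] at hnonneg
  simpa using (Complex.nonneg_iff.1 hnonneg).2.symm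

theorem re_apply_le_of_realPart_le (hρ : ∀ x : S, 0 ≤ ρ (star x * x))
    (hS : IsClosed (S : Set A)) (hρ1 : ρ 1 = 1) {a : S} {u : ℝ}
    (ha : (ℜ (a : A) : A) ≤ algebraMap ℝ A u) : (ρ a).re ≤ u := by
  have him : (ρ (ℑ a)).im = 0 := ρ.im_apply_eq_zero_of_isSelfAdjoint hρ hS hρ1 (ℑ a).2
  have hre : (ρ a).re = (ρ (ℜ a)).re := by
    conv_lhs => rw [← realPart_add_I_smul_imaginaryPart a]
    simp [him]
  have hcoe : ((ℜ a : S) : A) = ℜ (a : A) := map_realPart S.subtype a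
  have hnonneg : 0 ≤ ρ ((u : ℂ) • 1 - ℜ a) := by
    refine ρ.apply_nonneg_of_coe_nonneg hρ hS ?_
    simpa [hcoe, Algebra.algebraMap_eq_smul_one] using sub_nonneg.2 ha
  rw [map_sub, map_smul, hρ1, smul_eq_mul, mul_one] at hnonneg
  have := (Complex.nonneg_iff.1 hnonneg).1
  rw [Complex.sub_re, Complex.ofReal_re] at this
  linarith

end LinearMap

end StarSubalgebra

namespace ContinuousLinearMap

theorem reApplyInnerSelf_le_mul_norm_sq {𝕜 E : Type*} [RCLike 𝕜] [NormedAddCommGroup E]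
    [InnerProductSpace 𝕜 E] {T : E →L[𝕜] E} {u : ℝ}
    (h : ∀ x, ‖x‖ = 1 → T.reApplyInnerSelf x ≤ u) (x : E) :
    T.reApplyInnerSelf x ≤ u * ‖x‖ ^ 2 := by
  rcases eq_or_ne x 0 with rfl | hx
  · simp [reApplyInnerSelf_apply]
  have hx' : 0 < ‖x‖ := norm_pos_iff.2 hx
  have hunit := h ((‖x‖⁻¹ : 𝕜) • x) (by simp [norm_smul, hx'.ne'])
  rw [T.reApplyInnerSelf_smul, norm_inv, RCLike.norm_ofReal, abs_of_pos hx'] at hunit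
  rwa [inv_pow, inv_mul_le_iff₀ (by positivity), mul_comm] at hunit

variable {H : Type*} [NormedAddCommGroup H] [InnerProductSpace ℂ H] [CompleteSpace H]

theorem le_algebraMap_of_reApplyInnerSelf_le {T : H →L[ℂ] H} (hT : IsSelfAdjoint T) {u : ℝ}
    (h : ∀ x, ‖x‖ = 1 → T.reApplyInnerSelf x ≤ u) : T ≤ algebraMap ℝ (H →L[ℂ] H) u := by
  rw [le_def, isPositive_def']
  refine ⟨(IsSelfAdjoint.algebraMap _ (.all u)).sub hT, fun x => ?_⟩
  have := reApplyInnerSelf_le_mul_norm_sq h x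
  simp only [reApplyInnerSelf_apply] at this ⊢
  simpa [inner_sub_left, ← Complex.ofReal_pow] using this

theorem reApplyInnerSelf_realPart (T : H →L[ℂ] H) (x : H) :
    (ℜ T : H →L[ℂ] H).reApplyInnerSelf x = T.reApplyInnerSelf x := by
  have hsymm : (⟪x, T x⟫_ℂ).re = (⟪T x, x⟫_ℂ).re := by rw [← inner_conj_symm, Complex.conj_re]
  simp [reApplyInnerSelf_apply, realPart_apply_coe, star_eq_adjoint, inner_add_left,
    adjoint_inner_left, hsymm, ← two_mul]

end ContinuousLinearMap

theorem exists_fin_sum_smul_dist_lt_of_mem_closure_convexHull {α E : Type*}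
    [PseudoMetricSpace E] [AddCommGroup E] [Module ℝ E] {f : α → E} {t : Set α} {p : E}
    (hp : p ∈ closure (convexHull ℝ (f '' t))) {ε : ℝ} (hε : 0 < ε) :
    ∃ (l : ℕ) (w : Fin l → ℝ) (y : Fin l → α), (∀ j, 0 ≤ w j) ∧ ∑ j, w j = 1 ∧
      (∀ j, y j ∈ t) ∧ dist p (∑ j, w j • f (y j)) < ε := by
  obtain ⟨q, hq, hpq⟩ := Metric.mem_closure_iff.1 hp ε hε
  obtain ⟨ι, _, w, z, hw0, hw1, hz, rfl⟩ := mem_convexHull_iff_exists_fintype.1 hq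
  choose y hyt hyz using hz
  let e := (Fintype.equivFin ι).symm
  refine ⟨Fintype.card ι, w ∘ e, y ∘ e, fun j => hw0 _, ?_, fun j => hyt _, ?_⟩
  · rwa [Function.comp_def, e.sum_comp w]
  · simpa only [Function.comp_apply, hyz, e.sum_comp (fun i => w i • z i)] using hpq

section VectorStates

variable {H : Type*} [NormedAddCommGroup H] [InnerProductSpace ℂ H] [CompleteSpace H]
  {C : StarSubalgebra ℂ (H →L[ℂ] H)} {ι : Type*} [Fintype ι]

noncomputable def vectorStateTuple (x : ι → C) (ξ : H) : ι → ℂ :=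
  fun i => ⟪ξ, (x i : H →L[ℂ] H) ξ⟫_ℂ

theorem apply_mem_closure_convexHull_vectorStateTuple (hC : IsClosed (C : Set (H →L[ℂ] H)))
    (ρ : C →ₗ[ℂ] ℂ) (hρ1 : ρ 1 = 1) (hρpos : ∀ x : C, 0 ≤ ρ (star x * x)) (x : ι → C) :
    (fun i => ρ (x i)) ∈ closure (convexHull ℝ (vectorStateTuple x '' Metric.sphere 0 1)) := by
  classical
  by_contra hr
  obtain ⟨f, u, hf_lt, hu_lt⟩ := RCLike.geometric_hahn_banach_closed_point (𝕜 := ℂ)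
    (convex_convexHull ℝ _).closure isClosed_closure hr
  let c : ι → ℂ := fun i => f (Pi.single i 1)
  have hf : ∀ v, f v = ∑ i, c i * v i := fun v => by
    conv_lhs => rw [pi_eq_sum_univ' v]
    simp [c, mul_comm]
  let a : C := ∑ i, c i • x i
  have hfρ : f (fun i => ρ (x i)) = ρ a := by simp [hf, a, map_sum]
  have hfξ : ∀ ξ, f (vectorStateTuple x ξ) = ⟪ξ, (a : H →L[ℂ] H) ξ⟫_ℂ := fun ξ => by
    simp [hf, a, vectorStateTuple]
  have hnum : ∀ ξ : H, ‖ξ‖ = 1 → (ℜ (a : H →L[ℂ] H) : H →L[ℂ] H).reApplyInnerSelf ξ ≤ u := by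
    intro ξ hξ
    rw [ContinuousLinearMap.reApplyInnerSelf_realPart, ContinuousLinearMap.reApplyInnerSelf_apply,
      ← inner_conj_symm, RCLike.conj_re, ← hfξ]
    exact (hf_lt _ (subset_closure (subset_convexHull ℝ _ ⟨ξ, by simpa using hξ, rfl⟩))).le
  have hρa := ρ.re_apply_le_of_realPart_le hρpos hC hρ1
    (ContinuousLinearMap.le_algebraMap_of_reApplyInnerSelf_le (ℜ (a : H →L[ℂ] H)).prop hnum)
  rw [hfρ] at hu_lt
  exact (hu_lt.trans_le hρa).false

end VectorStates

theorem mixed_vector_states_dense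
    {H : Type*} [NormedAddCommGroup H] [InnerProductSpace ℂ H] [CompleteSpace H]
    (C : StarSubalgebra ℂ (H →L[ℂ] H)) (hC : IsClosed (C : Set (H →L[ℂ] H)))
    (ρ : C →ₗ[ℂ] ℂ) (hρ1 : ρ 1 = 1) (hρpos : ∀ x : C, 0 ≤ ρ (star x * x))
    (n : ℕ) (x : Fin n → C) (ε : ℝ) (hε : 0 < ε) :
    ∃ (l : ℕ) (lam : Fin l → ℝ) (ξ : Fin l → H),
      (∀ j, 0 ≤ lam j) ∧ (∑ j, lam j) = 1 ∧ (∀ j, ‖ξ j‖ = 1) ∧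
      ∀ i, ‖ρ (x i) - ∑ j, (lam j : ℂ) *
          (inner ℂ (ξ j) (((x i : H →L[ℂ] H)) (ξ j)) : ℂ)‖ < ε := by
  obtain ⟨l, lam, ξ, hlam0, hlam1, hξ, hdist⟩ :=
    exists_fin_sum_smul_dist_lt_of_mem_closure_convexHull
      (apply_mem_closure_convexHull_vectorStateTuple hC ρ hρ1 hρpos x) hε
  refine ⟨l, lam, ξ, hlam0, hlam1, fun j => by simpa using hξ j, fun i => ?_⟩
  calc _ = ‖((fun i => ρ (x i)) - ∑ j, lam j • vectorStateTuple x (ξ j)) i‖ := by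
        simp [vectorStateTuple, Finset.sum_apply, Complex.real_smul]
    _ ≤ _ := norm_le_pi_norm _ i
    _ < ε := by rwa [← dist_eq_norm]
end

section
/- (Schur products of commuting positive operator matrices) Let H be a complex Hilbert space, n ≥ 1, and let 𝒜, ℬ ∈ Mₙ(B(H)) be matrices of bounded operators such that 𝒜 ≥ 0 and ℬ ≥ 0 in the C*-algebra Mₙ(B(H)), and such that all entries pairwise commute: 𝒜_{ij} ℬ_{kl} = ℬ_{kl} 𝒜_{ij} for all indices i, j, k, l. Then the entrywise (Schur) product 𝒜 ⊙ ℬ, defined by (𝒜 ⊙ ℬ)_{ij} = 𝒜_{ij} ℬ_{ij}, is also positive: 𝒜 ⊙ ℬ ≥ 0 in Mₙ(B(H)). -/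
/-!
Write `𝒜 = α * α` and `ℬ = β * β` with `α, β` the positive square roots. Square roots lie in the
bicommutant, so the entries of `α` commute with those of `β` (and of `β⋆ = β`); this is seen by
letting a scalar matrix `diag(c, …, c)` commute with `𝒜` or `ℬ`. Then
`(𝒜 ⊙ ℬ)ᵢⱼ = ∑ₖ ∑ₗ (αₖᵢ βₗᵢ)⋆ (αₖⱼ βₗⱼ)`, a sum of rank-one matrices `v⋆ v`, each of which is
`R⋆ R` for the matrix `R` whose only nonzero row is `v`.
-/

open Matrix CStarMatrix

/- Stated for an abstract `B` because on `CStarMatrix` the real continuous functional calculus is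
not found by instance search (its two `Algebra ℝ` instances are not reducibly defeq), so
`CFC.sqrt` of a matrix is only reached through this lemma. -/
theorem CStarAlgebra.exists_isSelfAdjoint_mul_self_eq_forall_commute {B : Type*} [CStarAlgebra B]
    [PartialOrder B] [StarOrderedRing B] {a : B} (ha : 0 ≤ a) :
    ∃ b, IsSelfAdjoint b ∧ b * b = a ∧ ∀ c, Commute c a → Commute c b :=
  ⟨CFC.sqrt a, (CFC.sqrt_nonneg a).isSelfAdjoint, CFC.sqrt_mul_sqrt_self a,
    fun c hc => by rw [CFC.sqrt_eq_cfc]; exact (hc.symm.cfc_nnreal _).symm⟩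

namespace Matrix

variable {ι α : Type*} [Fintype ι]

theorem scalar_commute_iff_forall_commute [DecidableEq ι] [Semiring α] {r : α}
    {M : Matrix ι ι α} : Commute (scalar ι r) M ↔ ∀ i j, Commute r (M i j) := by
  rw [scalar_commute_iff, ← Matrix.ext_iff]
  rfl

theorem hadamard_star_mul_self_eq_sum [Semiring α] [StarRing α] (X Y : Matrix ι ι α)
    (h : ∀ i j k l, Commute (X i j) (Y k l)) (h' : ∀ i j k l, Commute (X i j) (star (Y k l))) :
    (star X * X) ⊙ (star Y * Y) =
      ∑ k, ∑ l, vecMulVec (star fun j => X k j * Y l j) fun j => X k j * Y l j := by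
  ext i j
  simp only [hadamard_apply, mul_apply, star_apply, Finset.sum_mul_sum, Matrix.sum_apply,
    vecMulVec_apply, Pi.star_apply, star_mul]
  refine Finset.sum_congr rfl fun k _ => Finset.sum_congr rfl fun l _ => ?_
  have hcomm : Commute (star (X k i) * X k j) (star (Y l i)) :=
    (h k i l i).star_star.mul_left (h' k j l i)
  simp only [← mul_assoc]
  rw [hcomm.eq]
  simp only [mul_assoc]

end Matrix

namespace CStarMatrix

variable {ι A : Type*} [Fintype ι] [CStarAlgebra A] [PartialOrder A] [StarOrderedRing A]

lemma nonneg_ofMatrix_star_mul_self (X : Matrix ι ι A) : 0 ≤ ofMatrix (star X * X) :=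
  star_mul_self_nonneg (ofMatrix X)

variable [DecidableEq ι]

lemma nonneg_ofMatrix_vecMulVec_star_self (v : ι → A) : 0 ≤ ofMatrix (vecMulVec (star v) v) := by
  cases isEmpty_or_nonempty ι with
  | inl _ =>
    rw [Subsingleton.elim (α := Matrix ι ι A) (vecMulVec _ _) (star 0 * 0)]
    exact nonneg_ofMatrix_star_mul_self 0
  | inr h =>
    obtain ⟨i₀⟩ := h
    have : vecMulVec (star v) v = star (updateRow 0 i₀ v) * updateRow 0 i₀ v := by
      ext i j
      simp [Matrix.mul_apply, Matrix.star_apply, vecMulVec_apply, updateRow_apply]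
    rw [this]
    exact nonneg_ofMatrix_star_mul_self _

lemma exists_isSelfAdjoint_mul_self_eq_forall_commute {M : Matrix ι ι A} (hM : 0 ≤ ofMatrix M) :
    ∃ α : Matrix ι ι A, IsSelfAdjoint α ∧ α * α = M ∧
      ∀ c, (∀ i j, Commute c (M i j)) → ∀ i j, Commute c (α i j) := by
  obtain ⟨α, hα, hαα, hcomm⟩ := CStarAlgebra.exists_isSelfAdjoint_mul_self_eq_forall_commute hM
  refine ⟨ofMatrix.symm α, hα, hαα, fun c hc => ?_⟩
  rw [← scalar_commute_iff_forall_commute] at hc ⊢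
  exact hcomm (ofMatrix (scalar ι c)) hc

lemma nonneg_ofMatrix_hadamard_star_mul_self (X Y : Matrix ι ι A)
    (h : ∀ i j k l, Commute (X i j) (Y k l)) (h' : ∀ i j k l, Commute (X i j) (star (Y k l))) :
    0 ≤ ofMatrix ((star X * X) ⊙ (star Y * Y)) := by
  rw [hadamard_star_mul_self_eq_sum X Y h h']
  exact Finset.sum_nonneg fun k _ => Finset.sum_nonneg fun l _ =>
    nonneg_ofMatrix_vecMulVec_star_self _

theorem nonneg_ofMatrix_hadamard {M N : Matrix ι ι A} (hM : 0 ≤ ofMatrix M) (hN : 0 ≤ ofMatrix N)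
    (h : ∀ i j k l, Commute (M i j) (N k l)) : 0 ≤ ofMatrix (M ⊙ N) := by
  obtain ⟨α, hα, rfl, hαcomm⟩ := exists_isSelfAdjoint_mul_self_eq_forall_commute hM
  obtain ⟨β, hβ, rfl, hβcomm⟩ := exists_isSelfAdjoint_mul_self_eq_forall_commute hN
  have hαβ : ∀ i j k l, Commute (α i j) (β k l) := fun i j =>
    hβcomm _ fun k l => (hαcomm _ (fun i j => (h i j k l).symm) i j).symm
  have hαβ' : ∀ i j k l, Commute (α i j) (star (β k l)) := fun i j k l => by
    rw [← Matrix.star_apply, hβ.star_eq]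
    exact hαβ i j l k
  simpa only [hα.star_eq, hβ.star_eq] using nonneg_ofMatrix_hadamard_star_mul_self α β hαβ hαβ'

end CStarMatrix

theorem schur_product_of_commuting_positive_general
    {H : Type*} [NormedAddCommGroup H] [InnerProductSpace ℂ H] [CompleteSpace H]
    (n : ℕ)
    (𝒜 ℬ : Matrix (Fin n) (Fin n) (H →L[ℂ] H))
    (hA : ∃ x : Matrix (Fin n) (Fin n) (H →L[ℂ] H), 𝒜 = star x * x)
    (hB : ∃ x : Matrix (Fin n) (Fin n) (H →L[ℂ] H), ℬ = star x * x)
    (hcomm : ∀ i j k l, 𝒜 i j * ℬ k l = ℬ k l * 𝒜 i j) :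
    ∃ x : Matrix (Fin n) (Fin n) (H →L[ℂ] H),
      (Matrix.of fun i j => 𝒜 i j * ℬ i j) = star x * x := by
  obtain ⟨x, rfl⟩ := hA
  obtain ⟨y, rfl⟩ := hB
  have hpos := nonneg_ofMatrix_hadamard (nonneg_ofMatrix_star_mul_self x)
    (nonneg_ofMatrix_star_mul_self y) hcomm
  obtain ⟨z, hz, hzz, -⟩ := exists_isSelfAdjoint_mul_self_eq_forall_commute hpos
  exact ⟨z, by rw [hz.star_eq, hzz]; rfl⟩

theorem schur_product_of_commuting_positive
    {H : Type*} [NormedAddCommGroup H] [InnerProductSpace ℂ H] [CompleteSpace H]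
    (n : ℕ) (hn : 1 ≤ n)
    (𝒜 ℬ : Matrix (Fin n) (Fin n) (H →L[ℂ] H))
    (hA : ∃ x : Matrix (Fin n) (Fin n) (H →L[ℂ] H), 𝒜 = star x * x)
    (hB : ∃ x : Matrix (Fin n) (Fin n) (H →L[ℂ] H), ℬ = star x * x)
    (hcomm : ∀ i j k l, 𝒜 i j * ℬ k l = ℬ k l * 𝒜 i j) :
    ∃ x : Matrix (Fin n) (Fin n) (H →L[ℂ] H),
      (Matrix.of fun i j => 𝒜 i j * ℬ i j) = star x * x :=
  schur_product_of_commuting_positive_general n 𝒜 ℬ hA hB hcomm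
end

section
/- The set Q_c of commuting-operator quantum correlations for the scenario (k, m) is a closed subset of ℝ^{k²m²} (with its standard topology). -/
/-!
**Statement 11.** The set `Q_c` of commuting-operator quantum correlations for the scenario
`(k, m)` is a closed subset of `ℝ^(k²m²)` (here the space of functions
`Fin m → Fin m → Fin k → Fin k → ℝ` with its standard (product) topology).
-/

/-- `P` (written `P a b x y` for `P(a,b|x,y)`) is a commuting-operator quantum
correlation for the scenario `(k, m)`; Hilbert spaces are taken in a fixed universe. -/
def IsCommutingCorrelation (k m : ℕ) (P : Fin m → Fin m → Fin k → Fin k → ℝ) : Prop :=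
  ∃ (H : Type) (_ : NormedAddCommGroup H) (_ : InnerProductSpace ℂ H) (_ : CompleteSpace H)
    (ψ : H) (A B : Fin k → Fin m → (H →L[ℂ] H)),
    ‖ψ‖ = 1 ∧
    (∀ x a, (A x a).IsPositive) ∧
    (∀ y b, (B y b).IsPositive) ∧
    (∀ x, (∑ a, A x a) = 1) ∧
    (∀ y, (∑ b, B y b) = 1) ∧
    (∀ x y a b, A x a * B y b = B y b * A x a) ∧
    (∀ x y a b, (P a b x y : ℂ) = inner ℂ ψ ((A x a * B y b) ψ))

/-!
A limit `P` of correlations `Pₙ`, realised by `(Hₙ, ψₙ, Aₙ, Bₙ)`, is realised on an ultraproduct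
of the `Hₙ`: bounded sequences `(fₙ)` with the semi-inner product `lim_U ⟪fₙ, gₙ⟫`, completed.
Every element of a POVM is a contraction, so the sequences `(Aₙ)`, `(Bₙ)` act componentwise;
positivity, commutation and the POVM relations hold in each component and hence in the limit,
and `⟪ψ, A B ψ⟫ = lim_U ⟪ψₙ, Aₙ Bₙ ψₙ⟫ = lim_U Pₙ = P`.
-/

open Filter Topology UniformSpace RCLike
open scoped ENNReal InnerProductSpace

noncomputable section

theorem Ultrafilter.exists_tendsto_of_norm_le {ι X : Type*} [SeminormedAddCommGroup X]
    [ProperSpace X] (U : Ultrafilter ι) {f : ι → X} {C : ℝ} (hf : ∀ i, ‖f i‖ ≤ C) :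
    ∃ x, Tendsto f U (𝓝 x) := by
  obtain ⟨x, -, hx⟩ := (isCompact_closedBall (0 : X) C).ultrafilter_le_nhds (U.map f)
    (le_principal_iff.2 (mem_map.2 (univ_mem' fun i => by simpa using hf i)))
  exact ⟨x, hx⟩

theorem ContinuousLinearMap.norm_le_one_of_isPositive_of_sum_eq_one {E ι : Type*}
    [NormedAddCommGroup E] [InnerProductSpace ℂ E] [CompleteSpace E] [Fintype ι]
    {T : ι → E →L[ℂ] E} (hT : ∀ i, (T i).IsPositive) (hsum : ∑ i, T i = 1) (i : ι) :
    ‖T i‖ ≤ 1 := by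
  have hT' : ∀ i, 0 ≤ T i := fun i => (nonneg_iff_isPositive _).mpr (hT i)
  refine (CStarAlgebra.norm_le_one_iff_of_nonneg (T i) (hT' i)).2 ?_
  rw [← hsum]
  exact Finset.single_le_sum (fun j _ => hT' j) (Finset.mem_univ i)

namespace ContinuousLinearMap

section Completion

variable {R α : Type*} [Ring R] [UniformSpace α] [AddCommGroup α] [IsUniformAddGroup α]
  [Module R α] [UniformContinuousConstSMul R α]

theorem ext_completion {S T : Completion α →L[R] Completion α}
    (h : ∀ x : α, S x = T x) : S = T :=
  DFunLike.coe_injective (Completion.ext S.continuous T.continuous h)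

def completionRingHom : (α →L[R] α) →+* (Completion α →L[R] Completion α) where
  toFun T := T.completion
  map_one' := ext_completion fun x => by simp
  map_mul' S T := ext_completion fun x => by simp
  map_zero' := ext_completion fun x => by simp [Completion.coe_zero]
  map_add' S T := ext_completion fun x => by simp [Completion.coe_add]

@[simp] theorem completionRingHom_apply (T : α →L[R] α) : completionRingHom T = T.completion := rfl

end Completion

theorem isPositive_completion {𝕜 E : Type*} [RCLike 𝕜] [SeminormedAddCommGroup E]
    [InnerProductSpace 𝕜 E] {T : E →L[𝕜] E} (hT : (T : E →ₗ[𝕜] E).IsSymmetric)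
    (hT' : ∀ x, 0 ≤ re ⟪T x, x⟫_𝕜) : T.completion.IsPositive := by
  refine ⟨fun x y => ?_, fun x => ?_⟩
  · induction x, y using Completion.induction_on₂ with
    | hp => exact isClosed_eq (by fun_prop) (by fun_prop)
    | ih x y => simpa [Completion.inner_coe] using hT x y
  · induction x using Completion.induction_on with
    | hp => exact isClosed_le continuous_const <|
        continuous_re.comp (Completion.Continuous.inner T.completion.continuous continuous_id)
    | ih x => simpa [reApplyInnerSelf, Completion.inner_coe] using hT' x

end ContinuousLinearMap

/-- `lp H ∞` with the sup norm replaced by the seminorm `lim_U ‖f i‖`; its `Completion` is the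
Hilbert-space ultraproduct. `𝕜` is part of the type because the seminorm instance is derived from
the `𝕜`-inner product. -/
def PreUltraproduct (𝕜 : Type*) [RCLike 𝕜] {ι : Type*} (_U : Ultrafilter ι) (H : ι → Type*)
    [∀ i, NormedAddCommGroup (H i)] [∀ i, InnerProductSpace 𝕜 (H i)] : Type _ :=
  lp H ∞

namespace PreUltraproduct

variable {𝕜 : Type*} [RCLike 𝕜] {ι : Type*} {U : Ultrafilter ι} {H : ι → Type*}
  [∀ i, NormedAddCommGroup (H i)] [∀ i, InnerProductSpace 𝕜 (H i)]

instance : AddCommGroup (PreUltraproduct 𝕜 U H) := inferInstanceAs (AddCommGroup (lp H ∞))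

instance : Module 𝕜 (PreUltraproduct 𝕜 U H) := inferInstanceAs (Module 𝕜 (lp H ∞))

def toLp : PreUltraproduct 𝕜 U H ≃ₗ[𝕜] lp H ∞ := LinearEquiv.refl 𝕜 _

instance : CoeFun (PreUltraproduct 𝕜 U H) fun _ => ∀ i, H i := ⟨fun f => ⇑(toLp f)⟩

@[ext] theorem ext {f g : PreUltraproduct 𝕜 U H} (h : ∀ i, f i = g i) : f = g :=
  toLp.injective (lp.ext (funext h))

theorem norm_apply_le (f : PreUltraproduct 𝕜 U H) (i : ι) : ‖f i‖ ≤ ‖toLp f‖ :=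
  lp.norm_apply_le_norm ENNReal.top_ne_zero _ i

instance : Inner 𝕜 (PreUltraproduct 𝕜 U H) :=
  ⟨fun f g => limUnder (U : Filter ι) fun i => ⟪f i, g i⟫_𝕜⟩

theorem inner_eq_of_tendsto {f g : PreUltraproduct 𝕜 U H} {c : 𝕜}
    (h : Tendsto (fun i => ⟪f i, g i⟫_𝕜) U (𝓝 c)) : ⟪f, g⟫_𝕜 = c :=
  h.limUnder_eq

theorem tendsto_inner (f g : PreUltraproduct 𝕜 U H) :
    Tendsto (fun i => ⟪f i, g i⟫_𝕜) U (𝓝 ⟪f, g⟫_𝕜) :=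
  tendsto_nhds_limUnder <| U.exists_tendsto_of_norm_le fun i =>
    (norm_inner_le_norm _ _).trans <|
      mul_le_mul (norm_apply_le f i) (norm_apply_le g i) (norm_nonneg _) (norm_nonneg _)

instance : PreInnerProductSpace.Core 𝕜 (PreUltraproduct 𝕜 U H) where
  conj_inner_symm f g := (inner_eq_of_tendsto <|
    ((continuous_conj.tendsto _).comp (tendsto_inner g f)).congr fun i => inner_conj_symm _ _).symm
  re_inner_nonneg f :=
    ge_of_tendsto' ((continuous_re.tendsto _).comp (tendsto_inner f f)) fun i => inner_self_nonneg
  add_left f g h := inner_eq_of_tendsto <| by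
    simpa [inner_add_left] using (tendsto_inner f h).add (tendsto_inner g h)
  smul_left f g c := inner_eq_of_tendsto <| by
    simpa [inner_smul_left] using (tendsto_inner f g).const_mul (starRingEnd 𝕜 c)

instance : SeminormedAddCommGroup (PreUltraproduct 𝕜 U H) :=
  InnerProductSpace.Core.toSeminormedAddCommGroup (𝕜 := 𝕜)

instance : InnerProductSpace 𝕜 (PreUltraproduct 𝕜 U H) := .ofCore _

theorem tendsto_norm (f : PreUltraproduct 𝕜 U H) :
    Tendsto (fun i => ‖f i‖) U (𝓝 ‖f‖) := by
  rw [norm_eq_sqrt_re_inner (𝕜 := 𝕜) f]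
  exact ((continuous_re.tendsto _).comp (tendsto_inner f f)).sqrt.congr fun i =>
    (norm_eq_sqrt_re_inner (𝕜 := 𝕜) (f i)).symm

theorem norm_eq_of_tendsto {f : PreUltraproduct 𝕜 U H} {c : ℝ}
    (h : Tendsto (fun i => ‖f i‖) U (𝓝 c)) : ‖f‖ = c :=
  tendsto_nhds_unique (tendsto_norm f) h

def mapCLM (T : ∀ i, H i →L[𝕜] H i) {K : ℝ} (hK : 0 ≤ K) (hT : ∀ i, ‖T i‖ ≤ K) :
    PreUltraproduct 𝕜 U H →L[𝕜] PreUltraproduct 𝕜 U H :=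
  LinearMap.mkContinuous
    (toLp.symm.toLinearMap ∘ₗ (lp.mapCLM ∞ T hK hT).toLinearMap ∘ₗ toLp.toLinearMap) K
    fun f => le_of_tendsto_of_tendsto' (tendsto_norm _) ((tendsto_norm f).const_mul K)
      fun i => (T i).le_of_opNorm_le (hT i) (f i)

variable {T S : ∀ i, H i →L[𝕜] H i} {K L : ℝ} {hK : 0 ≤ K} {hL : 0 ≤ L}
  {hT : ∀ i, ‖T i‖ ≤ K} {hS : ∀ i, ‖S i‖ ≤ L}

@[simp] theorem mapCLM_apply (f : PreUltraproduct 𝕜 U H) (i : ι) :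
    mapCLM T hK hT f i = T i (f i) := rfl

theorem commute_mapCLM (h : ∀ i, Commute (T i) (S i)) :
    Commute (mapCLM T hK hT : PreUltraproduct 𝕜 U H →L[𝕜] _) (mapCLM S hL hS) :=
  ContinuousLinearMap.ext fun f => ext fun i => by simpa using DFunLike.congr_fun (h i).eq (f i)

theorem sum_mapCLM {κ : Type*} [Fintype κ] {T : κ → ∀ i, H i →L[𝕜] H i}
    {hT : ∀ j i, ‖T j i‖ ≤ K} (h : ∀ i, ∑ j, T j i = 1) :
    ∑ j, (mapCLM (T j) hK (hT j) : PreUltraproduct 𝕜 U H →L[𝕜] _) = 1 :=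
  ContinuousLinearMap.ext fun f => ext fun i => by
    simp only [FunLike.coe_sum, Finset.sum_apply, map_sum, lp.coeFn_sum, mapCLM_apply]
    rw [← Finset.sum_apply, ← FunLike.coe_sum, h]
    rfl

theorem isPositive_completion_mapCLM (h : ∀ i, (T i).IsPositive) :
    (mapCLM T hK hT : PreUltraproduct 𝕜 U H →L[𝕜] _).completion.IsPositive := by
  refine ContinuousLinearMap.isPositive_completion (fun f g => ?_) fun f => ?_
  · exact inner_eq_of_tendsto <| (tendsto_inner f (mapCLM T hK hT g)).congr fun i =>
      ((h i).isSymmetric (f i) (g i)).symm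
  · exact ge_of_tendsto' ((continuous_re.tendsto _).comp (tendsto_inner _ f)) fun i =>
      (h i).re_inner_nonneg_left (f i)

theorem tendsto_inner_completion_mapCLM_mul (f : PreUltraproduct 𝕜 U H) :
    Tendsto (fun i => ⟪f i, (T i * S i) (f i)⟫_𝕜) U
      (𝓝 ⟪(f : Completion (PreUltraproduct 𝕜 U H)),
        ((mapCLM T hK hT).completion * (mapCLM S hL hS).completion :
          Completion (PreUltraproduct 𝕜 U H) →L[𝕜] _) f⟫_𝕜) := by
  simp only [← ContinuousLinearMap.completionRingHom_apply, ← map_mul]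
  rw [ContinuousLinearMap.completionRingHom_apply, ContinuousLinearMap.completion_apply_coe,
    Completion.inner_coe]
  exact tendsto_inner f _

end PreUltraproduct

open PreUltraproduct ContinuousLinearMap in
theorem IsCommutingCorrelation.of_tendsto {k m : ℕ} {ι : Type} {U : Ultrafilter ι}
    {P : ι → Fin m → Fin m → Fin k → Fin k → ℝ} (hP : ∀ i, IsCommutingCorrelation k m (P i))
    {Q : Fin m → Fin m → Fin k → Fin k → ℝ} (hQ : Tendsto P U (𝓝 Q)) :
    IsCommutingCorrelation k m Q := by
  choose H _ _ _ ψ A B hψ hA hB hAsum hBsum hcomm hcorr using hP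
  have hA1 i x := norm_le_one_of_isPositive_of_sum_eq_one (hA i x) (hAsum i x)
  have hB1 i y := norm_le_one_of_isPositive_of_sum_eq_one (hB i y) (hBsum i y)
  let A' x a : PreUltraproduct ℂ U H →L[ℂ] _ := mapCLM (A · x a) zero_le_one (hA1 · x a)
  let B' y b : PreUltraproduct ℂ U H →L[ℂ] _ := mapCLM (B · y b) zero_le_one (hB1 · y b)
  let Ψ : PreUltraproduct ℂ U H :=
    toLp.symm ⟨ψ, memℓp_infty ⟨1, by rintro _ ⟨i, rfl⟩; exact (hψ i).le⟩⟩
  refine ⟨Completion (PreUltraproduct ℂ U H), inferInstance, inferInstance, inferInstance, Ψ,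
    fun x a => (A' x a).completion, fun y b => (B' y b).completion, ?_,
    fun x a => isPositive_completion_mapCLM (hA · x a),
    fun y b => isPositive_completion_mapCLM (hB · y b), fun x => ?_, fun y => ?_,
    fun x y a b => ?_, fun x y a b => ?_⟩
  · rw [Completion.norm_coe]
    exact norm_eq_of_tendsto (tendsto_const_nhds.congr fun i => (hψ i).symm)
  · simpa only [← completionRingHom_apply, ← map_sum, map_one] using
      congr_arg completionRingHom (sum_mapCLM (hAsum · x))
  · simpa only [← completionRingHom_apply, ← map_sum, map_one] using
      congr_arg completionRingHom (sum_mapCLM (hBsum · y))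
  · simpa only [completionRingHom_apply] using
      ((commute_mapCLM (hcomm · x y a b)).map completionRingHom).eq
  · have hQ' : Tendsto (fun i => (P i a b x y : ℂ)) U (𝓝 (Q a b x y)) :=
      ((by fun_prop : Continuous fun R : Fin m → Fin m → Fin k → Fin k → ℝ =>
        (R a b x y : ℂ)).tendsto Q).comp hQ
    exact tendsto_nhds_unique (hQ'.congr fun i => hcorr i x y a b)
      (tendsto_inner_completion_mapCLM_mul Ψ)

theorem isClosed_commutingCorrelations_general (k m : ℕ) :
    IsClosed {P : Fin m → Fin m → Fin k → Fin k → ℝ | IsCommutingCorrelation k m P} := by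
  refine IsSeqClosed.isClosed fun P Q hP hQ => ?_
  obtain ⟨U, hU⟩ := exists_ultrafilter_le (atTop : Filter ℕ)
  exact .of_tendsto hP (hQ.mono_left hU)

theorem isClosed_commutingCorrelations (k m : ℕ) (hk : 1 ≤ k) (hm : 1 ≤ m) :
    IsClosed {P : Fin m → Fin m → Fin k → Fin k → ℝ | IsCommutingCorrelation k m P} :=
  isClosed_commutingCorrelations_general k m
end
end

section
/- Every commuting-operator quantum correlation is attainable by projective measurements: if P is a commuting-operator quantum correlation for the scenario (k, m), then there exist a complex Hilbert space H, a unit vector ψ ∈ H, and self-adjoint idempotent operators (orthogonal projections) A^x_a, B^y_b ∈ B(H) with Σ_a A^x_a = 1 for each x, Σ_b B^y_b = 1 for each y, and A^x_a B^y_b = B^y_b A^x_a for all x, y, a, b, such that P(a,b|x,y) = ⟨ψ, A^x_a B^y_b ψ⟩ for all x, y, a, b. -/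
open ContinuousLinearMap
open scoped InnerProduct

namespace ContinuousLinearMap

variable {E F : Type*} [NormedAddCommGroup E] [InnerProductSpace ℂ E] [CompleteSpace E]
  [NormedAddCommGroup F] [InnerProductSpace ℂ F] [CompleteSpace F] {V : E →L[ℂ] F}

lemma adjoint_comp_comp_cancel {G : Type*} [NormedAddCommGroup G] [InnerProductSpace ℂ G]
    (hV : V† ∘L V = 1) (X : G →L[ℂ] E) : V† ∘L (V ∘L X) = X := by
  rw [← comp_assoc, hV, one_def, id_comp]

lemma isStarProjection_conj_adjoint (hV : V† ∘L V = 1) {T : E →L[ℂ] E}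
    (hT : IsStarProjection T) : IsStarProjection (V ∘L T ∘L V†) where
  isIdempotentElem := by
    rw [IsIdempotentElem, mul_def]
    simp only [comp_assoc, adjoint_comp_comp_cancel hV]
    rw [← comp_assoc T T, ← mul_def, hT.isIdempotentElem.eq]
  isSelfAdjoint := by
    rw [IsSelfAdjoint, star_eq_adjoint, adjoint_comp, adjoint_comp, adjoint_adjoint,
      ← star_eq_adjoint, hT.isSelfAdjoint.star_eq, comp_assoc]

lemma isStarProjection_one_sub_comp_adjoint (hV : V† ∘L V = 1) :
    IsStarProjection (1 - V ∘L V†) := by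
  simpa [one_def] using (isStarProjection_conj_adjoint hV (.one (E →L[ℂ] E))).one_sub

lemma one_sub_comp_adjoint_comp (hV : V† ∘L V = 1) : (1 - V ∘L V†) ∘L V = 0 := by
  simp only [sub_comp, comp_assoc, hV, one_def, id_comp, comp_id, sub_self]

lemma adjoint_comp_one_sub_comp_adjoint (hV : V† ∘L V = 1) : V† ∘L (1 - V ∘L V†) = 0 := by
  simp only [comp_sub, ← comp_assoc, hV, one_def, id_comp, comp_id, sub_self]

end ContinuousLinearMap

section ExtendAlong

variable {E F ι : Type*} [NormedAddCommGroup E] [InnerProductSpace ℂ E] [CompleteSpace E]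
  [NormedAddCommGroup F] [InnerProductSpace ℂ F] [CompleteSpace F] [DecidableEq ι]

noncomputable def extendAlong (V : E →L[ℂ] F) (z : ι) (A : ι → E →L[ℂ] E) (i : ι) :
    F →L[ℂ] F :=
  V ∘L A i ∘L V† + if i = z then 1 - V ∘L V† else 0

variable {V : E →L[ℂ] F} {z : ι} {A : ι → E →L[ℂ] E}

lemma extendAlong_comp (hV : V† ∘L V = 1) (i : ι) : extendAlong V z A i ∘L V = V ∘L A i := by
  rw [extendAlong, add_comp, comp_assoc, comp_assoc, hV, one_def, comp_id]
  split_ifs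
  · rw [one_sub_comp_adjoint_comp hV, add_zero]
  · rw [zero_comp, add_zero]

lemma adjoint_comp_extendAlong_comp (hV : V† ∘L V = 1) (i : ι) :
    V† ∘L extendAlong V z A i ∘L V = A i := by
  rw [extendAlong_comp hV, adjoint_comp_comp_cancel hV]

lemma isPositive_extendAlong (hV : V† ∘L V = 1) {i : ι} (hA : (A i).IsPositive) :
    (extendAlong V z A i).IsPositive := by
  refine (hA.conj_adjoint V).add ?_
  split_ifs
  · exact IsPositive.of_isStarProjection (isStarProjection_one_sub_comp_adjoint hV)
  · exact isPositive_zero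

lemma sum_extendAlong [Fintype ι] (hA : ∑ i, A i = 1) : ∑ i, extendAlong V z A i = 1 := by
  simp only [extendAlong, Finset.sum_add_distrib, Finset.sum_ite_eq', Finset.mem_univ, if_true,
    ← comp_finsetSum, ← finsetSum_comp, hA, one_def, id_comp, add_sub_cancel]

lemma isStarProjection_extendAlong (hV : V† ∘L V = 1) {i : ι} (hA : IsStarProjection (A i)) :
    IsStarProjection (extendAlong V z A i) := by
  refine (isStarProjection_conj_adjoint hV hA).add ?_ ?_
  · split_ifs
    · exact isStarProjection_one_sub_comp_adjoint hV
    · exact .zero _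
  · split_ifs
    · rw [mul_def, comp_assoc, comp_assoc, adjoint_comp_one_sub_comp_adjoint hV, comp_zero,
        comp_zero]
    · exact mul_zero _

lemma commute_extendAlong {T : E →L[ℂ] E} {T' : F →L[ℂ] F} (hT : IsSelfAdjoint T)
    (hT' : IsSelfAdjoint T') (hTV : T' ∘L V = V ∘L T) {i : ι} (hTA : Commute T (A i)) :
    Commute T' (extendAlong V z A i) := by
  have hVT : V† ∘L T' = T ∘L V† := by
    simpa [← star_eq_adjoint, hT.star_eq, hT'.star_eq] using congrArg adjoint hTV
  have hconj : T' ∘L (V ∘L A i ∘L V†) = (V ∘L A i ∘L V†) ∘L T' :=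
    calc T' ∘L (V ∘L A i ∘L V†) = V ∘L (T * A i) ∘L V† := by rw [← comp_assoc, hTV]; rfl
      _ = V ∘L A i ∘L (V† ∘L T') := by rw [hTA.eq, hVT]; rfl
  have hrange : T' ∘L (V ∘L V†) = (V ∘L V†) ∘L T' := by
    rw [← comp_assoc, hTV, comp_assoc, comp_assoc, hVT]
  rw [Commute, SemiconjBy, extendAlong, mul_add, add_mul]
  refine congrArg₂ (· + ·) hconj ?_
  split_ifs
  · rw [mul_sub, sub_mul, mul_one, one_mul]
    exact congrArg (T' - ·) hrange
  · rw [mul_zero, zero_mul]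

end ExtendAlong

section NaimarkDilation

variable {ι E : Type*} [NormedAddCommGroup E] [InnerProductSpace ℂ E]

section CoordProj

variable [DecidableEq ι]

variable (E) in
noncomputable def coordProj (i : ι) : PiLp 2 (fun _ : ι => E) →L[ℂ] PiLp 2 (fun _ : ι => E) :=
  (PiLp.continuousLinearEquiv 2 ℂ _).symm.toContinuousLinearMap ∘L
    ContinuousLinearMap.single ℂ (fun _ => E) i ∘L PiLp.proj 2 _ i

@[simp] lemma coordProj_apply (i : ι) (φ : PiLp 2 (fun _ : ι => E)) (j : ι) :
    (coordProj E i φ) j = if j = i then φ i else 0 := by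
  simp [coordProj]

variable [Fintype ι]

lemma inner_coordProj_left (i : ι) (φ χ : PiLp 2 (fun _ : ι => E)) :
    inner ℂ (coordProj E i φ) χ = inner ℂ (φ i) (χ i) := by
  rw [PiLp.inner_apply,
    Finset.sum_eq_single_of_mem i (Finset.mem_univ i) fun j _ hj => by simp [hj]]
  simp

lemma inner_coordProj_right (i : ι) (φ χ : PiLp 2 (fun _ : ι => E)) :
    inner ℂ φ (coordProj E i χ) = inner ℂ (φ i) (χ i) := by
  rw [PiLp.inner_apply,
    Finset.sum_eq_single_of_mem i (Finset.mem_univ i) fun j _ hj => by simp [hj]]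
  simp

lemma sum_coordProj : ∑ i, coordProj E i = (1 : PiLp 2 (fun _ : ι => E) →L[ℂ] _) := by
  ext φ j
  simp [sum_apply, WithLp.ofLp_sum]

end CoordProj

variable [CompleteSpace E]

noncomputable def naimarkIsometry (A : ι → E →L[ℂ] E) : E →L[ℂ] PiLp 2 (fun _ : ι => E) :=
  (PiLp.continuousLinearEquiv 2 ℂ _).symm.toContinuousLinearMap ∘L
    ContinuousLinearMap.pi fun i => CFC.sqrt (A i)

@[simp] lemma naimarkIsometry_apply (A : ι → E →L[ℂ] E) (v : E) (i : ι) :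
    (naimarkIsometry A v) i = CFC.sqrt (A i) v := rfl

variable [Fintype ι]

variable (ι E) in
/-- `T ↦ T ⊗ 1`, reading `PiLp 2 (fun _ : ι => E)` as `E ⊗ ℂ^ι`. -/
noncomputable def ampliation :
    (E →L[ℂ] E) →⋆ₐ[ℂ] (PiLp 2 (fun _ : ι => E) →L[ℂ] PiLp 2 (fun _ : ι => E)) where
  toFun T := (PiLp.continuousLinearEquiv 2 ℂ _).symm.toContinuousLinearMap ∘L
    piMap (fun _ => T) ∘L (PiLp.continuousLinearEquiv 2 ℂ _).toContinuousLinearMap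
  map_one' := by ext; rfl
  map_mul' _ _ := by ext; rfl
  map_zero' := by ext; rfl
  map_add' _ _ := by ext; rfl
  commutes' _ := by ext; rfl
  map_star' T := by
    rw [star_eq_adjoint, star_eq_adjoint, eq_adjoint_iff]
    intro φ χ
    simp only [PiLp.inner_apply]
    exact Finset.sum_congr rfl fun i _ => adjoint_inner_left T (χ i) (φ i)

@[simp] lemma ampliation_apply (T : E →L[ℂ] E) (φ : PiLp 2 (fun _ : ι => E)) (i : ι) :
    (ampliation ι E T φ) i = T (φ i) := rfl

lemma ContinuousLinearMap.IsPositive.ampliation {T : E →L[ℂ] E} (hT : T.IsPositive) :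
    (ampliation ι E T).IsPositive := by
  rw [← nonneg_iff_isPositive] at hT ⊢
  exact map_nonneg _ hT

lemma ampliation_comp_naimarkIsometry {A : ι → E →L[ℂ] E} {T : E →L[ℂ] E}
    (hT : ∀ i, Commute T (A i)) :
    ampliation ι E T ∘L naimarkIsometry A = naimarkIsometry A ∘L T := by
  ext v i
  have hsqrt : Commute T (CFC.sqrt (A i)) := by
    rw [CFC.sqrt_eq_cfc]
    exact ((hT i).symm.cfc_nnreal _).symm
  simpa using congrArg (· v) hsqrt.eq

variable [DecidableEq ι]

lemma isStarProjection_coordProj (i : ι) : IsStarProjection (coordProj E i) where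
  isIdempotentElem := by
    ext φ j
    by_cases hj : j = i <;> simp [hj]
  isSelfAdjoint := by
    rw [IsSelfAdjoint, star_eq_adjoint, eq_comm, eq_adjoint_iff]
    intro φ χ
    rw [inner_coordProj_left, inner_coordProj_right]

lemma commute_ampliation_coordProj (T : E →L[ℂ] E) (i : ι) :
    Commute (ampliation ι E T) (coordProj E i) := by
  ext φ j
  by_cases hj : j = i <;> simp [hj]

lemma adjoint_naimarkIsometry_comp_coordProj_comp {A : ι → E →L[ℂ] E} {i : ι}
    (hA : (A i).IsPositive) :
    (naimarkIsometry A)† ∘L coordProj E i ∘L naimarkIsometry A = A i := by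
  have hsqrt : IsSelfAdjoint (CFC.sqrt (A i)) := .of_nonneg (CFC.sqrt_nonneg _)
  ext w
  refine ext_inner_left ℂ fun u => ?_
  rw [comp_apply, comp_apply, adjoint_inner_right, inner_coordProj_right, naimarkIsometry_apply,
    naimarkIsometry_apply, ← adjoint_inner_right, ← star_eq_adjoint, hsqrt.star_eq, ← comp_apply,
    ← mul_def, CFC.sqrt_mul_sqrt_self _ ((nonneg_iff_isPositive _).mpr hA)]

lemma adjoint_naimarkIsometry_comp_self {A : ι → E →L[ℂ] E} (hA : ∀ i, (A i).IsPositive)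
    (hsum : ∑ i, A i = 1) : (naimarkIsometry A)† ∘L naimarkIsometry A = 1 :=
  calc (naimarkIsometry A)† ∘L naimarkIsometry A
      = (naimarkIsometry A)† ∘L (∑ i, coordProj E i) ∘L naimarkIsometry A := by
        rw [sum_coordProj, one_def, id_comp]
    _ = ∑ i, A i := by
        rw [finsetSum_comp, comp_finsetSum]
        exact Finset.sum_congr rfl fun i _ => adjoint_naimarkIsometry_comp_coordProj_comp (hA i)
    _ = 1 := hsum

end NaimarkDilation

section Models

variable {X Y ι κ : Type*} [Fintype ι] [Fintype κ]

structure IsCommutingModel {H : Type*} [NormedAddCommGroup H] [InnerProductSpace ℂ H]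
    [CompleteSpace H] (P : ι → κ → X → Y → ℝ) (ψ : H) (A : X → ι → H →L[ℂ] H)
    (B : Y → κ → H →L[ℂ] H) : Prop where
  norm_eq_one : ‖ψ‖ = 1
  isPositive_left : ∀ x a, (A x a).IsPositive
  isPositive_right : ∀ y b, (B y b).IsPositive
  sum_left : ∀ x, ∑ a, A x a = 1
  sum_right : ∀ y, ∑ b, B y b = 1
  commute : ∀ x y a b, Commute (A x a) (B y b)
  correlation : ∀ x y a b, (P a b x y : ℂ) = inner ℂ ψ ((A x a * B y b) ψ)

variable {H : Type*} [NormedAddCommGroup H] [InnerProductSpace ℂ H] [CompleteSpace H]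
  {P : ι → κ → X → Y → ℝ} {ψ : H} {A : X → ι → H →L[ℂ] H} {B : Y → κ → H →L[ℂ] H}

lemma IsCommutingModel.swap (h : IsCommutingModel P ψ A B) :
    IsCommutingModel (fun b a y x => P a b x y) ψ B A where
  norm_eq_one := h.norm_eq_one
  isPositive_left := h.isPositive_right
  isPositive_right := h.isPositive_left
  sum_left := h.sum_right
  sum_right := h.sum_left
  commute x y a b := (h.commute y x b a).symm
  correlation x y a b := by rw [h.correlation, (h.commute y x b a).eq]

variable [DecidableEq X] [DecidableEq ι]

noncomputable def naimarkLeft (A : X → ι → H →L[ℂ] H) (x₀ : X) (z : ι) :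
    X → ι → PiLp 2 (fun _ : ι => H) →L[ℂ] PiLp 2 (fun _ : ι => H) :=
  Function.update (fun x => extendAlong (naimarkIsometry (A x₀)) z (A x)) x₀ (coordProj H)

@[simp] lemma naimarkLeft_self (x₀ : X) (z : ι) : naimarkLeft A x₀ z x₀ = coordProj H := by
  simp [naimarkLeft]

lemma naimarkLeft_of_ne {x₀ x : X} (hx : x ≠ x₀) (z : ι) :
    naimarkLeft A x₀ z x = extendAlong (naimarkIsometry (A x₀)) z (A x) := by
  simp [naimarkLeft, hx]

lemma IsCommutingModel.naimarkDilation (h : IsCommutingModel P ψ A B) (x₀ : X) (z : ι) :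
    IsCommutingModel P (naimarkIsometry (A x₀) ψ) (naimarkLeft A x₀ z)
      (fun y b => ampliation ι H (B y b)) := by
  set V := naimarkIsometry (A x₀)
  have hV : V† ∘L V = 1 := adjoint_naimarkIsometry_comp_self (h.isPositive_left x₀) (h.sum_left x₀)
  have hBV : ∀ y b, ampliation ι H (B y b) ∘L V = V ∘L B y b := fun y b =>
    ampliation_comp_naimarkIsometry fun c => (h.commute x₀ y c b).symm
  have hVAV : ∀ x a, V† ∘L naimarkLeft A x₀ z x a ∘L V = A x a := by
    intro x a
    rcases eq_or_ne x x₀ with rfl | hx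
    · rw [naimarkLeft_self]
      exact adjoint_naimarkIsometry_comp_coordProj_comp (h.isPositive_left x a)
    · rw [naimarkLeft_of_ne hx]
      exact adjoint_comp_extendAlong_comp hV a
  refine ⟨?_, fun x a => ?_, fun y b => (h.isPositive_right y b).ampliation, fun x => ?_,
    fun y => by rw [← map_sum, h.sum_right, map_one], fun x y a b => ?_, fun x y a b => ?_⟩
  · rw [(norm_map_iff_adjoint_comp_self V).mpr hV, h.norm_eq_one]
  · rcases eq_or_ne x x₀ with rfl | hx
    · rw [naimarkLeft_self]
      exact .of_isStarProjection (isStarProjection_coordProj a)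
    · rw [naimarkLeft_of_ne hx]
      exact isPositive_extendAlong hV (h.isPositive_left x a)
  · rcases eq_or_ne x x₀ with rfl | hx
    · rw [naimarkLeft_self, sum_coordProj]
    · rw [naimarkLeft_of_ne hx, sum_extendAlong (h.sum_left x)]
  · rcases eq_or_ne x x₀ with rfl | hx
    · rw [naimarkLeft_self]
      exact (commute_ampliation_coordProj (B y b) a).symm
    · rw [naimarkLeft_of_ne hx]
      exact (commute_extendAlong (h.isPositive_right y b).isSelfAdjoint
        ((h.isPositive_right y b).ampliation.isSelfAdjoint) (hBV y b) (h.commute x y a b).symm).symm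
  · have hcompress : V† ∘L ((naimarkLeft A x₀ z x a * ampliation ι H (B y b)) ∘L V) =
        A x a * B y b := by
      rw [mul_def, comp_assoc, hBV, ← hVAV x a]
      rfl
    rw [h.correlation, ← hcompress, comp_apply, adjoint_inner_right]
    rfl

end Models

section ProjectiveModels

variable {X Y ι κ : Type} [Fintype ι] [Fintype κ]

def HasModelProjectiveOn (P : ι → κ → X → Y → ℝ) (SA : Set X) (SB : Set Y) : Prop :=
  ∃ (H : Type) (_ : NormedAddCommGroup H) (_ : InnerProductSpace ℂ H) (_ : CompleteSpace H)
    (ψ : H) (A : X → ι → H →L[ℂ] H) (B : Y → κ → H →L[ℂ] H),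
    IsCommutingModel P ψ A B ∧ (∀ x ∈ SA, ∀ a, IsStarProjection (A x a)) ∧
      (∀ y ∈ SB, ∀ b, IsStarProjection (B y b))

variable {P : ι → κ → X → Y → ℝ} {SA : Set X} {SB : Set Y}

lemma HasModelProjectiveOn.swap (h : HasModelProjectiveOn P SA SB) :
    HasModelProjectiveOn (fun b a y x => P a b x y) SB SA := by
  obtain ⟨H, _, _, _, ψ, A, B, hmodel, hA, hB⟩ := h
  exact ⟨H, _, _, _, ψ, B, A, hmodel.swap, hB, hA⟩

lemma HasModelProjectiveOn.insert [Nonempty ι] (h : HasModelProjectiveOn P SA SB) (x₀ : X) :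
    HasModelProjectiveOn P (insert x₀ SA) SB := by
  classical
  obtain ⟨H, _, _, _, ψ, A, B, hmodel, hA, hB⟩ := h
  have hV := adjoint_naimarkIsometry_comp_self (hmodel.isPositive_left x₀) (hmodel.sum_left x₀)
  refine ⟨_, _, _, _, _, _, _, hmodel.naimarkDilation x₀ (Classical.arbitrary ι), ?_,
    fun y hy b => (hB y hy b).map (ampliation ι H)⟩
  rintro x hx a
  rcases eq_or_ne x x₀ with rfl | hne
  · rw [naimarkLeft_self]
    exact isStarProjection_coordProj a
  · rw [naimarkLeft_of_ne hne]
    exact isStarProjection_extendAlong hV (hA x (hx.resolve_left hne) a)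

lemma HasModelProjectiveOn.of_finite [Nonempty ι] (h : HasModelProjectiveOn P ∅ SB)
    (hS : SA.Finite) : HasModelProjectiveOn P SA SB := by
  induction SA, hS using Set.Finite.induction_on with
  | empty => exact h
  | insert _ _ ih => exact ih.insert _

end ProjectiveModels

theorem commutingCorrelation_projective_general
    (k m : ℕ) (hm : 1 ≤ m)
    (P : Fin m → Fin m → Fin k → Fin k → ℝ)
    (hP : IsCommutingCorrelation k m P) :
    ∃ (H : Type) (_ : NormedAddCommGroup H) (_ : InnerProductSpace ℂ H) (_ : CompleteSpace H)
      (ψ : H) (A B : Fin k → Fin m → (H →L[ℂ] H)),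
      ‖ψ‖ = 1 ∧
      (∀ x a, star (A x a) = A x a ∧ A x a * A x a = A x a) ∧
      (∀ y b, star (B y b) = B y b ∧ B y b * B y b = B y b) ∧
      (∀ x, (∑ a, A x a) = 1) ∧
      (∀ y, (∑ b, B y b) = 1) ∧
      (∀ x y a b, A x a * B y b = B y b * A x a) ∧
      (∀ x y a b, (P a b x y : ℂ) = inner ℂ ψ ((A x a * B y b) ψ)) := by
  have : Nonempty (Fin m) := ⟨⟨0, hm⟩⟩
  obtain ⟨H, _, _, _, ψ, A, B, hψ, hApos, hBpos, hAsum, hBsum, hcomm, hcorr⟩ := hP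
  have hmodel₀ : HasModelProjectiveOn P ∅ ∅ :=
    ⟨H, _, _, _, ψ, A, B, ⟨hψ, hApos, hBpos, hAsum, hBsum, hcomm, hcorr⟩, by simp, by simp⟩
  obtain ⟨H, _, _, _, ψ, A, B, hmodel, hA, hB⟩ :=
    ((hmodel₀.of_finite Set.finite_univ).swap.of_finite Set.finite_univ).swap
  exact ⟨H, _, _, _, ψ, A, B, hmodel.norm_eq_one,
    fun x a => ⟨(hA x trivial a).isSelfAdjoint, (hA x trivial a).isIdempotentElem⟩,
    fun y b => ⟨(hB y trivial b).isSelfAdjoint, (hB y trivial b).isIdempotentElem⟩,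
    hmodel.sum_left, hmodel.sum_right, hmodel.commute, hmodel.correlation⟩

theorem commutingCorrelation_projective
    (k m : ℕ) (hk : 1 ≤ k) (hm : 1 ≤ m)
    (P : Fin m → Fin m → Fin k → Fin k → ℝ)
    (hP : IsCommutingCorrelation k m P) :
    ∃ (H : Type) (_ : NormedAddCommGroup H) (_ : InnerProductSpace ℂ H) (_ : CompleteSpace H)
      (ψ : H) (A B : Fin k → Fin m → (H →L[ℂ] H)),
      ‖ψ‖ = 1 ∧
      (∀ x a, star (A x a) = A x a ∧ A x a * A x a = A x a) ∧
      (∀ y b, star (B y b) = B y b ∧ B y b * B y b = B y b) ∧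
      (∀ x, (∑ a, A x a) = 1) ∧
      (∀ y, (∑ b, B y b) = 1) ∧
      (∀ x y a b, A x a * B y b = B y b * A x a) ∧
      (∀ x y a b, (P a b x y : ℂ) = inner ℂ ψ ((A x a * B y b) ψ)) :=
  commutingCorrelation_projective_general k m hm P hP
end

section
/- (Realization of steering data; Hughston–Jozsa–Wootters) Let d, k, m ≥ 1 and let (α^x_a)_{x ∈ [k], a ∈ [m]} be steering data on M_d(ℂ). Then there exist a density matrix R on ℂ^d ⊗ ℂ^d, i.e., a positive semidefinite matrix R ∈ M_{d·d}(ℂ) (indexed by Fin d × Fin d) with trace 1, and matrices A^x_a ∈ M_d(ℂ) with each A^x_a positive semidefinite and Σ_a A^x_a = 1 for every x, such that α^x_a(X) = tr(R · (X ⊗ A^x_a)) for all x ∈ [k], a ∈ [m], and X ∈ M_d(ℂ), where X ⊗ A^x_a denotes the Kronecker product. -/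
/-!
Each `α^x_a` is `X ↦ tr(M^x_a X)` for a positive semidefinite `M^x_a`, and no-signaling says that
`ρ = ∑_a M^x_a` does not depend on `x`. Take the purification `R = |ψ⟩⟨ψ|` with `ψ = vec (√ρ)ᵀ`,
so that `tr(R (X ⊗ Bᵀ)) = tr(√ρ B √ρ X)`. It remains to solve `√ρ B^x_a √ρ = M^x_a` by a POVM: with
`t` the pseudo-inverse of `√ρ` and `P = √ρ t` the support projection of `ρ`, take
`B^x_a = t M^x_a t + (1 - P) / m`. Since `0 ≤ M^x_a ≤ ρ`, the kernel of `ρ` lies in that of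
`M^x_a`, so `P M^x_a P = M^x_a`. The required POVM is `A^x_a = (B^x_a)ᵀ`.
-/

open scoped ComplexOrder Kronecker

namespace Matrix

variable {n : Type*} [Fintype n] [DecidableEq n]

noncomputable def densityMatrix {R : Type*} [CommSemiring R] (φ : Matrix n n R →ₗ[R] R) :
    Matrix n n R :=
  of fun i j => φ (single j i 1)

lemma trace_densityMatrix_mul {R : Type*} [CommSemiring R] (φ : Matrix n n R →ₗ[R] R)
    (X : Matrix n n R) : (densityMatrix φ * X).trace = φ X := by
  conv_rhs => rw [matrix_eq_sum_single X]
  simp only [map_sum, trace, diag_apply, mul_apply, densityMatrix, of_apply]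
  rw [Finset.sum_comm]
  refine Finset.sum_congr rfl fun i _ => Finset.sum_congr rfl fun j _ => ?_
  rw [show single i j (X i j) = X i j • single i j 1 by rw [smul_single, smul_eq_mul, mul_one],
    map_smul, smul_eq_mul, mul_comm]

omit [Fintype n] in
lemma densityMatrix_sum {R ι : Type*} [CommSemiring R] (s : Finset ι)
    (φ : ι → Matrix n n R →ₗ[R] R) :
    densityMatrix (∑ i ∈ s, φ i) = ∑ i ∈ s, densityMatrix (φ i) := by
  ext i j
  simp [densityMatrix, sum_apply]

section MatrixOrder

open scoped MatrixOrder

lemma posSemidef_densityMatrix (φ : Matrix n n ℂ →ₗ[ℂ] ℂ)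
    (hφ : ∀ X : Matrix n n ℂ, X.PosSemidef → 0 ≤ φ X) : (densityMatrix φ).PosSemidef := by
  -- over `ℂ`, a positive functional commutes with `star`
  let ψ : Matrix n n ℂ →ₚ[ℂ] ℂ := .mk₀ φ fun X hX => hφ X (nonneg_iff_posSemidef.mp hX)
  refine .of_dotProduct_mulVec_nonneg ?_ fun v => ?_
  · ext i j
    have h := map_star ψ (single i j 1)
    simp only [star_eq_conjTranspose, conjTranspose_single, star_one] at h
    exact h.symm
  · rw [dotProduct_comm, ← trace_vecMulVec, ← mul_vecMulVec, trace_densityMatrix_mul]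
    exact hφ _ (posSemidef_vecMulVec_self_star v)

variable {𝕜 : Type*} [RCLike 𝕜]

lemma PosSemidef.mul_eq_zero_of_le {A B Q : Matrix n n 𝕜} (hA : A.PosSemidef)
    (hAB : (B - A).PosSemidef) (hBQ : B * Q = 0) : A * Q = 0 := by
  obtain ⟨C, rfl⟩ : ∃ C : Matrix n n 𝕜, A = Cᴴ * C :=
    ⟨CFC.sqrt A, by rw [← star_eq_conjTranspose, (CFC.sqrt_nonneg A).isSelfAdjoint.star_eq,
      CFC.sqrt_mul_sqrt_self A hA.nonneg]⟩
  have hneg : (Qᴴ * (B - Cᴴ * C) * Q).trace = -((C * Q)ᴴ * (C * Q)).trace := by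
    simp only [Matrix.mul_sub, Matrix.sub_mul, conjTranspose_mul, Matrix.mul_assoc, hBQ,
      Matrix.mul_zero, zero_sub, trace_neg]
  have hzero : ((C * Q)ᴴ * (C * Q)).trace = 0 :=
    le_antisymm (neg_nonneg.mp (hneg ▸ (hAB.conjTranspose_mul_mul_same Q).trace_nonneg))
      (posSemidef_conjTranspose_mul_self _).trace_nonneg
  rw [trace_conjTranspose_mul_self_eq_zero_iff] at hzero
  rw [Matrix.mul_assoc, hzero, Matrix.mul_zero]

lemma PosSemidef.exists_sqrt_pseudoInverse {ρ : Matrix n n 𝕜} (hρ : ρ.PosSemidef) :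
    ∃ s t : Matrix n n 𝕜, s.IsHermitian ∧ t.IsHermitian ∧ s * s = ρ ∧ s * t = t * s ∧
      s * t * s = s ∧ (1 - s * t).PosSemidef := by
  have hc (f : ℝ → ℝ) : ContinuousOn f (spectrum ℝ ρ) := (spectrum ℝ ρ).toFinite.continuousOn f
  have hsq : ∀ x ∈ spectrum ℝ ρ, √x * √x = x := fun x hx =>
    Real.mul_self_sqrt (spectrum_nonneg_of_nonneg hρ.nonneg hx)
  refine ⟨cfc Real.sqrt ρ, cfc (fun x => (√x)⁻¹) ρ, cfc_predicate _ _, cfc_predicate _ _,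
    ?_, ?_, ?_, ?_⟩
  · rw [← cfc_mul _ _ _ (hc _) (hc _), cfc_congr hsq, cfc_id' ℝ ρ]
  · rw [← cfc_mul _ _ _ (hc _) (hc _), ← cfc_mul _ _ _ (hc _) (hc _)]
    simp only [mul_comm]
  · rw [← cfc_mul _ _ _ (hc _) (hc _), ← cfc_mul _ _ _ (hc _) (hc _)]
    congr! 2 with x
    by_cases h : √x = 0 <;> field_simp [h]
  · rw [← cfc_mul _ _ _ (hc _) (hc _), ← cfc_one ℝ ρ, ← cfc_sub _ _ _ (hc _) (hc _)]
    refine nonneg_iff_posSemidef.mp (cfc_nonneg fun x _ => ?_)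
    by_cases h : √x = 0 <;> simp [h]

end MatrixOrder

variable {𝕜 : Type*} [RCLike 𝕜]

lemma exists_posSemidef_sum_eq_one_conj_eq {ι : Type*} [Fintype ι] [Nonempty ι]
    {ρ s t : Matrix n n 𝕜} {M : ι → Matrix n n 𝕜} (hM : ∀ i, (M i).PosSemidef)
    (hsum : ∑ i, M i = ρ) (ht : t.IsHermitian) (hss : s * s = ρ) (hst : s * t = t * s)
    (hsts : s * t * s = s) (hP : (1 - s * t).PosSemidef) :
    ∃ B : ι → Matrix n n 𝕜,
      (∀ i, (B i).PosSemidef) ∧ ∑ i, B i = 1 ∧ ∀ i, s * B i * s = M i := by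
  have hsP : s * (1 - s * t) = 0 := by
    calc s * (1 - s * t) = s - s * (t * s) := by rw [hst]; noncomm_ring
      _ = 0 := by rw [← Matrix.mul_assoc, hsts, sub_self]
  have hMP (i : ι) : M i * (1 - s * t) = 0 := by
    refine (hM i).mul_eq_zero_of_le (B := ρ) ?_ ?_
    · classical
      rw [← hsum, ← Finset.sum_erase_add _ _ (Finset.mem_univ i), add_sub_cancel_right]
      exact posSemidef_sum _ fun j _ => hM j
    · rw [← hss, Matrix.mul_assoc, hsP, Matrix.mul_zero]
  have hPM (i : ι) : (1 - s * t) * M i = 0 := by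
    rw [← hP.isHermitian.eq, ← (hM i).isHermitian.eq, ← conjTranspose_mul, hMP,
      conjTranspose_zero]
  refine ⟨fun i => t * M i * t + (Fintype.card ι : ℝ)⁻¹ • (1 - s * t), fun i => ?_, ?_,
    fun i => ?_⟩
  · refine .add ?_ (hP.smul (by positivity))
    simpa only [ht.eq] using (hM i).mul_mul_conjTranspose_same t
  · have htρt : t * ρ * t = s * t := by
      calc t * ρ * t = (t * s) * (s * t) := by rw [← hss]; noncomm_ring
        _ = s * t := by rw [← hst, ← Matrix.mul_assoc, hsts]
    rw [Finset.sum_add_distrib, ← Finset.sum_mul, ← Finset.mul_sum, hsum, htρt, Finset.sum_const,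
      Finset.card_univ, ← Nat.cast_smul_eq_nsmul ℝ, smul_smul,
      mul_inv_cancel₀ (Nat.cast_ne_zero.mpr Fintype.card_ne_zero), one_smul, add_sub_cancel]
  · calc s * (t * M i * t + (Fintype.card ι : ℝ)⁻¹ • (1 - s * t)) * s
        = s * t * M i * (t * s) + (Fintype.card ι : ℝ)⁻¹ • (s * (1 - s * t) * s) := by
          noncomm_ring
      _ = M i - (1 - s * t) * M i - M i * (1 - s * t) + (1 - s * t) * M i * (1 - s * t) := by
          rw [hsP, Matrix.zero_mul, smul_zero, add_zero, ← hst]; noncomm_ring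
      _ = M i := by rw [hPM, hMP, Matrix.zero_mul, sub_zero, sub_zero, add_zero]

omit [DecidableEq n] in
lemma trace_vecMulVec_vec_mul_kronecker {R : Type*} [CommRing R] [StarRing R]
    (S X A : Matrix n n R) :
    (vecMulVec (vec S) (star (vec S)) * (X ⊗ₖ A)).trace = (Sᴴ * A * S * Xᵀ).trace := by
  rw [trace_mul_comm, mul_vecMulVec, trace_vecMulVec, dotProduct_comm, kronecker_mulVec_vec,
    star_vec_dotProduct_vec, Matrix.mul_assoc, Matrix.mul_assoc, Matrix.mul_assoc]

omit [DecidableEq n] in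
lemma IsHermitian.trace_vecMulVec_vec_transpose_mul_kronecker {R : Type*} [CommRing R]
    [StarRing R] {s : Matrix n n R} (hs : s.IsHermitian) (B X : Matrix n n R) :
    (vecMulVec (vec sᵀ) (star (vec sᵀ)) * (X ⊗ₖ Bᵀ)).trace = (s * B * s * X).trace := by
  rw [trace_vecMulVec_vec_mul_kronecker, conjTranspose_transpose_eq_transpose_conjTranspose,
    hs.eq, ← transpose_mul, ← transpose_mul, ← transpose_mul, trace_transpose,
    Matrix.mul_assoc, trace_mul_comm]
  simp only [Matrix.mul_assoc]

end Matrix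

open Matrix

theorem steering_data_realization_general
    (d k m : ℕ) (hk : 1 ≤ k) (hm : 1 ≤ m)
    (α : Fin k → Fin m → (Matrix (Fin d) (Fin d) ℂ →ₗ[ℂ] ℂ))
    (hpos : ∀ x a (X : Matrix (Fin d) (Fin d) ℂ), X.PosSemidef → 0 ≤ α x a X)
    (hnorm : ∀ x, (∑ a, α x a 1) = 1)
    (hnosig : ∀ x x', (∑ a, α x a) = ∑ a, α x' a) :
    ∃ R : Matrix (Fin d × Fin d) (Fin d × Fin d) ℂ,
      R.PosSemidef ∧ R.trace = 1 ∧
      ∃ A : Fin k → Fin m → Matrix (Fin d) (Fin d) ℂ,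
        (∀ x a, (A x a).PosSemidef) ∧
        (∀ x, (∑ a, A x a) = 1) ∧
        ∀ x a (X : Matrix (Fin d) (Fin d) ℂ),
          α x a X = (R * (X ⊗ₖ A x a)).trace := by
  have : Nonempty (Fin m) := ⟨⟨0, hm⟩⟩
  let x₀ : Fin k := ⟨0, hk⟩
  let M x a := densityMatrix (α x a)
  have hsum x : ∑ a, M x a = ∑ a, M x₀ a := by simp only [M, ← densityMatrix_sum, hnosig x x₀]
  have hρ : (∑ a, M x₀ a).PosSemidef :=
    posSemidef_sum _ fun a _ => posSemidef_densityMatrix _ (hpos x₀ a)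
  obtain ⟨s, t, hs, ht, hss, hst, hsts, hP⟩ := hρ.exists_sqrt_pseudoInverse
  choose B hB hBsum hsBs using fun x => exists_posSemidef_sum_eq_one_conj_eq
    (fun a => posSemidef_densityMatrix _ (hpos x a)) (hsum x) ht hss hst hsts hP
  let R := vecMulVec (vec sᵀ) (star (vec sᵀ))
  have hrealize x a X : α x a X = (R * (X ⊗ₖ (B x a)ᵀ)).trace := by
    rw [hs.trace_vecMulVec_vec_transpose_mul_kronecker, hsBs, trace_densityMatrix_mul]
  have htrace : R.trace = 1 :=
    calc R.trace = (R * (1 ⊗ₖ (1 : Matrix (Fin d) (Fin d) ℂ)ᵀ)).trace := by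
          rw [transpose_one, one_kronecker_one, Matrix.mul_one]
      _ = ∑ a, (M x₀ a).trace := by
          rw [hs.trace_vecMulVec_vec_transpose_mul_kronecker, Matrix.mul_one, Matrix.mul_one, hss,
            trace_sum]
      _ = 1 := by simpa only [M, ← trace_densityMatrix_mul _ 1, Matrix.mul_one] using hnorm x₀
  refine ⟨R, posSemidef_vecMulVec_self_star _, htrace, fun x a => (B x a)ᵀ,
    fun x a => (hB x a).transpose, fun x => ?_, hrealize⟩
  rw [← transpose_sum, hBsum, transpose_one]

theorem steering_data_realization
    (d k m : ℕ) (hd : 1 ≤ d) (hk : 1 ≤ k) (hm : 1 ≤ m)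
    (α : Fin k → Fin m → (Matrix (Fin d) (Fin d) ℂ →ₗ[ℂ] ℂ))
    (hpos : ∀ x a (X : Matrix (Fin d) (Fin d) ℂ), X.PosSemidef → 0 ≤ α x a X)
    (hnorm : ∀ x, (∑ a, α x a 1) = 1)
    (hnosig : ∀ x x', (∑ a, α x a) = ∑ a, α x' a) :
    ∃ R : Matrix (Fin d × Fin d) (Fin d × Fin d) ℂ,
      R.PosSemidef ∧ R.trace = 1 ∧
      ∃ A : Fin k → Fin m → Matrix (Fin d) (Fin d) ℂ,
        (∀ x a, (A x a).PosSemidef) ∧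
        (∀ x, (∑ a, A x a) = 1) ∧
        ∀ x a (X : Matrix (Fin d) (Fin d) ℂ),
          α x a X = (R * (X ⊗ₖ A x a)).trace :=
  steering_data_realization_general d k m hk hm α hpos hnorm hnosig
end

section
/- (Ping-pong lemma) Let l ≥ 2, let G be a group acting on a nonempty set X, and let g_1, …, g_l ∈ G. Suppose there are 2l pairwise disjoint nonempty subsets X_1^-, …, X_l^-, X_1^+, …, X_l^+ ⊆ X such that for every i = 1, …, l: g_i · (X \ X_i^-) ⊆ X_i^+ and g_i^{-1} · (X \ X_i^+) ⊆ X_i^-. Then the group homomorphism from the free group on l generators to G sending the i-th generator to g_i is injective; in particular, the subgroup of G generated by g_1, …, g_l is free of rank l, and if g_1, …, g_l generate G then G is a free group on these generators. -/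
open scoped Pointwise

namespace FreeGroup

universe u v w

open Function in
/-- `FreeGroup.injective_lift_of_ping_pong` with the index type and the group in independent
universes: lift both to `max u v`, where the library version applies. -/
theorem injective_lift_of_ping_pong' {ι : Type u} {G : Type v} {α : Type w} [Nontrivial ι]
    [Group G] [MulAction G α] (a : ι → G) (X Y : ι → Set α)
    (hXnonempty : ∀ i, (X i).Nonempty) (hXdisj : Pairwise (Disjoint on X))
    (hYdisj : Pairwise (Disjoint on Y)) (hXYdisj : ∀ i j, Disjoint (X i) (Y j))
    (hX : ∀ i, a i • (Y i)ᶜ ⊆ X i) (hY : ∀ i, a⁻¹ i • (X i)ᶜ ⊆ Y i) :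
    Injective (lift a) := by
  let e : ULift.{v} ι ≃ ι := Equiv.ulift
  let a' : ULift.{v} ι → ULift.{u} G := fun i => ULift.up (a (e i))
  have hlift' : Injective (lift a') :=
    injective_lift_of_ping_pong a' (X ∘ e) (Y ∘ e) (fun _ => hXnonempty _)
      (fun _ _ hij => hXdisj (e.injective.ne hij)) (fun _ _ hij => hYdisj (e.injective.ne hij))
      (fun _ _ => hXYdisj _ _) (fun _ => hX _) (fun _ => hY _)
  have hfactor : lift a =
      (MulEquiv.ulift.toMonoidHom.comp (lift a')).comp (freeGroupCongr e.symm).toMonoidHom := by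
    ext
    rfl
  rw [hfactor]
  exact (MulEquiv.ulift.injective.comp hlift').comp (freeGroupCongr e.symm).injective

end FreeGroup

theorem ping_pong_lemma_general
    {G X : Type*} [Group G] [MulAction G X]
    (l : ℕ) (hl : 2 ≤ l) (g : Fin l → G)
    (Xm Xp : Fin l → Set X)
    (hpne : ∀ i, (Xp i).Nonempty)
    (hmm : ∀ i j, i ≠ j → Disjoint (Xm i) (Xm j))
    (hpp : ∀ i j, i ≠ j → Disjoint (Xp i) (Xp j))
    (hmp : ∀ i j, Disjoint (Xm i) (Xp j))
    (h₁ : ∀ i, g i • (Xm i)ᶜ ⊆ Xp i)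
    (h₂ : ∀ i, (g i)⁻¹ • (Xp i)ᶜ ⊆ Xm i) :
    Function.Injective ⇑(FreeGroup.lift g : FreeGroup (Fin l) →* G) := by
  have : Nontrivial (Fin l) := Fin.nontrivial_iff_two_le.mpr hl
  exact FreeGroup.injective_lift_of_ping_pong' g Xp Xm hpne hpp hmm
    (fun i j => (hmp j i).symm) h₁ h₂

theorem ping_pong_lemma
    {G X : Type*} [Group G] [MulAction G X] [Nonempty X]
    (l : ℕ) (hl : 2 ≤ l) (g : Fin l → G)
    (Xm Xp : Fin l → Set X)
    (hmne : ∀ i, (Xm i).Nonempty) (hpne : ∀ i, (Xp i).Nonempty)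
    (hmm : ∀ i j, i ≠ j → Disjoint (Xm i) (Xm j))
    (hpp : ∀ i j, i ≠ j → Disjoint (Xp i) (Xp j))
    (hmp : ∀ i j, Disjoint (Xm i) (Xp j))
    (h₁ : ∀ i, g i • (Xm i)ᶜ ⊆ Xp i)
    (h₂ : ∀ i, (g i)⁻¹ • (Xp i)ᶜ ⊆ Xm i) :
    Function.Injective ⇑(FreeGroup.lift g : FreeGroup (Fin l) →* G) :=
  ping_pong_lemma_general l hl g Xm Xp hpne hmm hpp hmp h₁ h₂
end

section
/- (Induction of unitary representations) Let G be a group, H ≤ G a subgroup, and let π : H → U(H_π) be a unitary representation of H on a complex Hilbert space H_π (a group homomorphism into the unitary group of B(H_π)). Then there exist a complex Hilbert space K, an isometric complex-linear embedding V : H_π → K, and a unitary representation σ : G → U(K) such that for every h ∈ H and every ξ ∈ H_π one has σ(h)(V ξ) = V(π(h) ξ); i.e., every unitary representation of a subgroup extends, along an isometric embedding of Hilbert spaces, to a unitary representation of the whole group. -/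
/-!
Choose coset representatives `s x` for `G ⧸ H` with `s H = 1`. Then
`c(g, x) = (s x)⁻¹ g s(g⁻¹ x)` lies in `H` and satisfies the cocycle identity, so
`(σ g f)(x) = π(c(g, x)) (f (g⁻¹ x))` is a unitary representation of `G` on `ℓ²(G ⧸ H, H_π)`
(the induced representation). Since `c(h, H) = h` for `h ∈ H`, the embedding of `H_π` as the
functions supported on the trivial coset intertwines `π` with `σ` restricted to `H`.
-/

open scoped ENNReal

section Cocycle

variable {G α M : Type*} [Group G] [MulAction G α]

/-- The identity that makes `(g • f) x = c g x • f (g⁻¹ • x)` an action of `G` on functions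
`α → E`, for any action of `M` on `E`. -/
def IsActionCocycle [Monoid M] (c : G → α → M) : Prop :=
  ∀ g₁ g₂ x, c (g₁ * g₂) x = c g₁ x * c g₂ (g₁⁻¹ • x)

theorem IsActionCocycle.map {N : Type*} [Monoid M] [Monoid N] {c : G → α → M} (hc : IsActionCocycle c)
    (φ : M →* N) : IsActionCocycle fun g x => φ (c g x) := fun g₁ g₂ x => by
  simp only [hc g₁ g₂ x, map_mul]

theorem IsActionCocycle.apply_one [Group M] {c : G → α → M}
    (hc : IsActionCocycle c) (x : α) : c 1 x = 1 := by
  simpa using hc 1 1 x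

end Cocycle

namespace QuotientGroup

variable {G : Type*} [Group G] (H : Subgroup G)

open Classical in
noncomputable def cosetRep (x : G ⧸ H) : G :=
  if x = ((1 : G) : G ⧸ H) then 1 else x.out

@[simp]
theorem mk_cosetRep (x : G ⧸ H) : ((cosetRep H x : G) : G ⧸ H) = x := by
  unfold cosetRep
  split_ifs with hx
  · exact hx.symm
  · exact out_eq' x

theorem cosetRep_mk_one : cosetRep H ((1 : G) : G ⧸ H) = 1 := if_pos rfl

noncomputable def cosetCocycle (g : G) (x : G ⧸ H) : H :=
  ⟨(cosetRep H x)⁻¹ * (g * cosetRep H (g⁻¹ • x)), by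
    rw [← QuotientGroup.eq]
    change _ = g • ((cosetRep H (g⁻¹ • x) : G) : G ⧸ H)
    simp⟩

theorem isActionCocycle_cosetCocycle : IsActionCocycle (cosetCocycle H) := fun g₁ g₂ x => by
  ext
  simp only [cosetCocycle, Subgroup.coe_mul, mul_inv_rev, mul_smul]
  group

theorem smul_mk_one_of_mem {g : G} (hg : g ∈ H) : g • ((1 : G) : G ⧸ H) = (1 : G) := by
  rwa [← MulAction.mem_stabilizer_iff, MulAction.stabilizer_quotient]

theorem cosetCocycle_mk_one (h : H) : cosetCocycle H h ((1 : G) : G ⧸ H) = h := by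
  ext
  simp [cosetCocycle, smul_mk_one_of_mem H (H.inv_mem h.2), cosetRep_mk_one]

end QuotientGroup

variable (𝕜 : Type*) {α : Type*} (E : α → Type*) [∀ i, NormedAddCommGroup (E i)] [NormedRing 𝕜]
  [∀ i, Module 𝕜 (E i)] [∀ i, IsBoundedSMul 𝕜 (E i)] [DecidableEq α] (p : ℝ≥0∞) [Fact (1 ≤ p)] in
noncomputable def lp.singleLinearIsometry (i : α) : E i →ₗᵢ[𝕜] lp E p :=
  ⟨lp.lsingle p i, lp.norm_single (zero_lt_one.trans_le Fact.out) i⟩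

section Reindex

variable {α β : Type*} {p : ℝ≥0∞}

theorem Memℓp.comp_equiv {E : Type*} [NormedAddCommGroup E] {f : α → E} (hf : Memℓp f p)
    (e : β ≃ α) : Memℓp (f ∘ e) p := by
  obtain rfl | rfl | hp := p.trichotomy
  · rw [memℓp_zero_iff] at hf ⊢
    exact hf.preimage e.injective.injOn
  · rw [memℓp_infty_iff] at hf ⊢
    rwa [← e.surjective.range_comp] at hf
  · rw [memℓp_gen_iff hp] at hf ⊢
    exact (e.summable_iff (f := fun a => ‖f a‖ ^ p.toReal)).mpr hf

theorem lp.norm_eq_of_norm_apply_eq {E : α → Type*} {F : β → Type*}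
    [∀ a, NormedAddCommGroup (E a)] [∀ b, NormedAddCommGroup (F b)] (hp : p ≠ 0)
    {f : lp E p} {g : lp F p} (e : β ≃ α) (h : ∀ b, ‖g b‖ = ‖f (e b)‖) : ‖g‖ = ‖f‖ := by
  obtain rfl | rfl | hp' := p.trichotomy
  · exact absurd rfl hp
  · simp only [lp.norm_eq_ciSup, h]
    exact e.iSup_comp (g := fun a => ‖f a‖)
  · simp only [lp.norm_eq_tsum_rpow hp', h]
    rw [e.tsum_eq (fun a => ‖f a‖ ^ p.toReal)]

end Reindex

namespace lp

variable {G α 𝕜 E : Type*} [Group G] [MulAction G α] [NormedAddCommGroup E] {p : ℝ≥0∞}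

section Semiring

variable [Semiring 𝕜] [Module 𝕜 E]

noncomputable def cocycleShift (c : G → α → (E ≃ₗᵢ[𝕜] E)) (g : G) (f : lp (fun _ : α => E) p) :
    lp (fun _ : α => E) p :=
  ⟨fun x => c g x (f (g⁻¹ • x)),
    ((lp.memℓp f).comp_equiv (MulAction.toPerm g⁻¹)).mono' fun x => by simp⟩

variable {c : G → α → (E ≃ₗᵢ[𝕜] E)}

theorem cocycleShift_apply (g : G) (f : lp (fun _ : α => E) p) (x : α) :
    cocycleShift c g f x = c g x (f (g⁻¹ • x)) := rfl

theorem cocycleShift_add (g : G) (f₁ f₂ : lp (fun _ : α => E) p) :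
    cocycleShift c g (f₁ + f₂) = cocycleShift c g f₁ + cocycleShift c g f₂ := by
  ext x
  simp [cocycleShift_apply]

theorem norm_cocycleShift [Fact (1 ≤ p)] (g : G) (f : lp (fun _ : α => E) p) :
    ‖cocycleShift c g f‖ = ‖f‖ :=
  norm_eq_of_norm_apply_eq (zero_lt_one.trans_le Fact.out).ne' (MulAction.toPerm g⁻¹)
    fun x => by simp [cocycleShift_apply]

theorem cocycleShift_mul (hc : IsActionCocycle c) (g₁ g₂ : G) (f : lp (fun _ : α => E) p) :
    cocycleShift c (g₁ * g₂) f = cocycleShift c g₁ (cocycleShift c g₂ f) := by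
  ext x
  simp [cocycleShift_apply, hc g₁ g₂ x, mul_smul]

theorem cocycleShift_one (hc : IsActionCocycle c) (f : lp (fun _ : α => E) p) :
    cocycleShift c 1 f = f := by
  ext x
  simp [cocycleShift_apply, hc.apply_one]

theorem cocycleShift_single [DecidableEq α] (g : G) (a : α) (ξ : E) :
    cocycleShift c g (lp.single p a ξ) = lp.single p (g • a) (c g (g • a) ξ) := by
  ext x
  obtain rfl | hx := eq_or_ne x (g • a)
  · simp [cocycleShift_apply]
  · simp [cocycleShift_apply, hx, inv_smul_eq_iff]

end Semiring

variable [NormedRing 𝕜] [Module 𝕜 E] [IsBoundedSMul 𝕜 E] {c : G → α → (E ≃ₗᵢ[𝕜] E)}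

theorem cocycleShift_smul (g : G) (a : 𝕜) (f : lp (fun _ : α => E) p) :
    cocycleShift c g (a • f) = a • cocycleShift c g f := by
  ext x
  simp [cocycleShift_apply]

variable (p) in
noncomputable def cocycleRep [Fact (1 ≤ p)] (hc : IsActionCocycle c) :
    G →* (lp (fun _ : α => E) p ≃ₗᵢ[𝕜] lp (fun _ : α => E) p) where
  toFun g :=
    { toFun := cocycleShift c g
      invFun := cocycleShift c g⁻¹
      map_add' := cocycleShift_add g
      map_smul' := cocycleShift_smul g
      left_inv f := by rw [← cocycleShift_mul hc, inv_mul_cancel, cocycleShift_one hc]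
      right_inv f := by rw [← cocycleShift_mul hc, mul_inv_cancel, cocycleShift_one hc]
      norm_map' := norm_cocycleShift g }
  map_one' := LinearIsometryEquiv.ext (cocycleShift_one hc)
  map_mul' g₁ g₂ := LinearIsometryEquiv.ext (cocycleShift_mul hc g₁ g₂)

theorem cocycleRep_apply [Fact (1 ≤ p)] (hc : IsActionCocycle c) (g : G)
    (f : lp (fun _ : α => E) p) : cocycleRep p hc g f = cocycleShift c g f := rfl

end lp

theorem induced_unitary_representation
    {G : Type u} [Group G] (H : Subgroup G)
    {Hπ : Type v} [NormedAddCommGroup Hπ] [InnerProductSpace ℂ Hπ] [CompleteSpace Hπ]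
    (π : H →* unitary (Hπ →L[ℂ] Hπ)) :
    ∃ (K : Type (max u v)) (_ : NormedAddCommGroup K) (_ : InnerProductSpace ℂ K)
      (_ : CompleteSpace K) (V : Hπ →ₗᵢ[ℂ] K) (σ : G →* unitary (K →L[ℂ] K)),
      ∀ (h : H) (ξ : Hπ),
        ((σ (h : G) : K →L[ℂ] K)) (V ξ) = V (((π h : Hπ →L[ℂ] Hπ)) ξ) := by
  classical
  let o : G ⧸ H := (1 : G)
  have hc := (QuotientGroup.isActionCocycle_cosetCocycle H).map
    (Unitary.linearIsometryEquiv.toMonoidHom.comp π)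
  refine ⟨lp (fun _ : G ⧸ H => Hπ) 2, inferInstance, inferInstance, inferInstance,
    lp.singleLinearIsometry ℂ (fun _ : G ⧸ H => Hπ) 2 o,
    Unitary.linearIsometryEquiv.symm.toMonoidHom.comp (lp.cocycleRep 2 hc), fun h ξ => ?_⟩
  change lp.cocycleRep 2 hc (h : G) (lp.single 2 o ξ) = lp.single 2 o ((π h : Hπ →L[ℂ] Hπ) ξ)
  rw [lp.cocycleRep_apply, lp.cocycleShift_single, QuotientGroup.smul_mk_one_of_mem H h.2,
    QuotientGroup.cosetCocycle_mk_one]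
  rfl
end

section
/- (Hardy-type inequality for local hidden variable models) Consider a bipartite scenario where Alice has 2 measurement settings with 3 outcomes labeled {+, −, ∅} and Bob has 2 measurement settings with 2 outcomes labeled {+, −}. If the conditional probability distribution P(a,b|x,y) admits a local hidden variable model, then P(+,+|2,2) ≤ P(+,+|2,1) + P(+,+|1,2) + P(−,−|1,1) + P(∅,−|1,1). -/
/-!
**Statement 18 (Hardy-type inequality for local hidden variable models).**

Alice has 2 settings (indexed by `Fin 2`, with index `0` ↔ setting `1` and index `1` ↔
setting `2`) and 3 outcomes (indexed by `Fin 3`, with `0` ↔ `+`, `1` ↔ `−`, `2` ↔ `∅`);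
Bob has 2 settings and 2 outcomes (`0` ↔ `+`, `1` ↔ `−`).  If `P(a,b|x,y)` admits a local
hidden variable model, then
`P(+,+|2,2) ≤ P(+,+|2,1) + P(+,+|1,2) + P(−,−|1,1) + P(∅,−|1,1)`.
-/

/-- `P` (written `P a b x y` for `P(a,b|x,y)`) admits a local hidden variable model. -/
def HasLHVModel {ka kb oa ob : ℕ}
    (P : Fin oa → Fin ob → Fin ka → Fin kb → ℝ) : Prop :=
  ∃ (Ω : Type) (_ : MeasurableSpace Ω) (μ : MeasureTheory.Measure Ω),
    MeasureTheory.IsProbabilityMeasure μ ∧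
    ∃ (pA : Fin ka → Fin oa → Ω → ℝ) (pB : Fin kb → Fin ob → Ω → ℝ),
      (∀ x a, Measurable (pA x a)) ∧ (∀ y b, Measurable (pB y b)) ∧
      (∀ x a ω, 0 ≤ pA x a ω) ∧ (∀ y b ω, 0 ≤ pB y b ω) ∧
      (∀ x ω, (∑ a, pA x a ω) = 1) ∧ (∀ y ω, (∑ b, pB y b ω) = 1) ∧
      (∀ a b x y, P a b x y = ∫ ω, pA x a ω * pB y b ω ∂μ)

/-! Integrating over the hidden variable, it suffices to prove the inequality for the products
`p_A(a|x,ω) p_B(b|y,ω)` at a single `ω`. Normalisation of Alice's and Bob's responses to setting 1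
turns `P(−,−|1,1) + P(∅,−|1,1)` into `(1 - v)(1 - u)` there, with `s, v` Alice's and `t, u` Bob's
probabilities of `+` under settings 2 and 1, and `s t ≤ s u + v t + (1 - v)(1 - u)` holds on
`[0, 1]⁴`: if `t ≤ u` every term is already dominated, otherwise use `s ≤ 1`. -/

open MeasureTheory Set

lemma le_one_of_nonneg_of_sum_eq_one {ι : Type*} [Fintype ι] {f : ι → ℝ}
    (h0 : ∀ i, 0 ≤ f i) (h1 : ∑ i, f i = 1) (i : ι) : f i ≤ 1 :=
  h1 ▸ Finset.single_le_sum (fun j _ => h0 j) (Finset.mem_univ i)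

lemma integrable_mul_of_mem_Icc {Ω : Type*} [MeasurableSpace Ω] {μ : Measure Ω}
    [IsFiniteMeasure μ] {f g : Ω → ℝ} (hf : Measurable f) (hg : Measurable g)
    (hf01 : ∀ ω, f ω ∈ Icc 0 1) (hg01 : ∀ ω, g ω ∈ Icc 0 1) :
    Integrable (fun ω => f ω * g ω) μ :=
  Integrable.of_bound (hf.mul hg).aestronglyMeasurable 1 <| .of_forall fun ω => by
    rw [norm_mul, Real.norm_of_nonneg (hf01 ω).1, Real.norm_of_nonneg (hg01 ω).1]
    exact mul_le_one₀ (hf01 ω).2 (hg01 ω).1 (hg01 ω).2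

lemma hardy_inequality_pointwise {s t u v : ℝ} (hs : s ∈ Icc 0 1) (ht : t ∈ Icc 0 1)
    (hu : u ∈ Icc 0 1) (hv : v ∈ Icc 0 1) :
    s * t ≤ s * u + v * t + (1 - v) * (1 - u) := by
  obtain ⟨hs0, hs1⟩ := hs
  obtain ⟨ht0, ht1⟩ := ht
  obtain ⟨hu0, hu1⟩ := hu
  obtain ⟨hv0, hv1⟩ := hv
  rcases le_or_gt t u with htu | hut
  · nlinarith [mul_nonneg hs0 (sub_nonneg.2 htu), mul_nonneg hv0 ht0,
      mul_nonneg (sub_nonneg.2 hv1) (sub_nonneg.2 hu1)]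
  · nlinarith [mul_nonneg (sub_nonneg.2 hs1) (sub_nonneg.2 hut.le), mul_nonneg hv0 hu0,
      mul_nonneg (sub_nonneg.2 hv1) (sub_nonneg.2 ht1)]

theorem hardy_inequality_of_lhv
    (P : Fin 3 → Fin 2 → Fin 2 → Fin 2 → ℝ) (hP : HasLHVModel P) :
    P 0 0 1 1 ≤ P 0 0 1 0 + P 0 0 0 1 + P 1 1 0 0 + P 2 1 0 0 := by
  obtain ⟨Ω, _, μ, _, pA, pB, hmA, hmB, hA0, hB0, hA1, hB1, hPA⟩ := hP
  have hA : ∀ x a ω, pA x a ω ∈ Icc 0 1 := fun x a ω =>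
    ⟨hA0 x a ω, le_one_of_nonneg_of_sum_eq_one (hA0 x · ω) (hA1 x ω) a⟩
  have hB : ∀ y b ω, pB y b ω ∈ Icc 0 1 := fun y b ω =>
    ⟨hB0 y b ω, le_one_of_nonneg_of_sum_eq_one (hB0 y · ω) (hB1 y ω) b⟩
  have hint : ∀ x a y b, Integrable (fun ω => pA x a ω * pB y b ω) μ := fun x a y b =>
    integrable_mul_of_mem_Icc (hmA x a) (hmB y b) (hA x a) (hB y b)
  have hpointwise : ∀ ω, pA 1 0 ω * pB 1 0 ω ≤ pA 1 0 ω * pB 0 0 ω + pA 0 0 ω * pB 1 0 ω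
      + pA 0 1 ω * pB 0 1 ω + pA 0 2 ω * pB 0 1 ω := fun ω => by
    have hnormA := hA1 0 ω
    have hnormB := hB1 0 ω
    rw [Fin.sum_univ_three] at hnormA
    rw [Fin.sum_univ_two] at hnormB
    linear_combination hardy_inequality_pointwise (hA 1 0 ω) (hB 1 0 ω) (hB 0 0 ω) (hA 0 0 ω)
      - pB 0 1 ω * hnormA - (1 - pA 0 0 ω) * hnormB
  have hsum := integral_mono (hint 1 0 1 0)
    ((((hint 1 0 0 0).add (hint 0 0 1 0)).add (hint 0 1 0 1)).add (hint 0 2 0 1)) hpointwise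
  rw [integral_add' (((hint _ _ _ _).add (hint _ _ _ _)).add (hint _ _ _ _)) (hint _ _ _ _),
    integral_add' ((hint _ _ _ _).add (hint _ _ _ _)) (hint _ _ _ _),
    integral_add' (hint _ _ _ _) (hint _ _ _ _)] at hsum
  simpa only [hPA] using hsum
end
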